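/- arXiv:1705.09095 — 3 statements merged into one kernel-verified Lean document; each statement's English description precedes it below -/
import Mathlib

section
/- The Chern–Finsler nonlinear connection coefficients satisfy δ_k N^σ_h = δ_h N^σ_k at every point of U × (ℂᵐ \ {0}), for all 1 ≤ k, h ≤ n and 1 ≤ σ ≤ m. Equivalently, the horizontal derivations δ_k commute: δ_k(δ_h f) = δ_h(δ_k f) for every C² complex-valued function f on U × (ℂᵐ \ {0}). (This is the proposition ρ_𝒯([𝒳_α,𝒳_β]) = 0 for the Chern–Finsler connection, in the case where the anchor is the identity, i.e. E = T′M.) -/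
open Complex BigOperators

/-- Wirtinger derivative `∂_k g` in the base direction, for `g : ℂⁿ × ℂᵐ → ℂ`,
defined through the real Fréchet derivative. -/
noncomputable def wz {n m : ℕ} (g : (Fin n → ℂ) × (Fin m → ℂ) → ℂ) (k : Fin n)
    (p : (Fin n → ℂ) × (Fin m → ℂ)) : ℂ :=
  (1/2) * (fderiv ℝ g p (Pi.single k 1, 0)
    - Complex.I * fderiv ℝ g p (Pi.single k Complex.I, 0))

/-- Wirtinger derivative `∂̇_α g` in the fibre direction. -/
noncomputable def wu {n m : ℕ} (g : (Fin n → ℂ) × (Fin m → ℂ) → ℂ) (α : Fin m)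
    (p : (Fin n → ℂ) × (Fin m → ℂ)) : ℂ :=
  (1/2) * (fderiv ℝ g p (0, Pi.single α 1)
    - Complex.I * fderiv ℝ g p (0, Pi.single α Complex.I))

/-- Conjugate Wirtinger derivative `∂̇_ᾱ g` in the fibre direction. -/
noncomputable def wubar {n m : ℕ} (g : (Fin n → ℂ) × (Fin m → ℂ) → ℂ) (α : Fin m)
    (p : (Fin n → ℂ) × (Fin m → ℂ)) : ℂ :=
  (1/2) * (fderiv ℝ g p (0, Pi.single α 1)
    + Complex.I * fderiv ℝ g p (0, Pi.single α Complex.I))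

/-- The Levi metric tensor `h_{αβ̄} = ∂̇_α ∂̇_β̄ F` of a Finsler function `F`. -/
noncomputable def hmet {n m : ℕ} (F : (Fin n → ℂ) × (Fin m → ℂ) → ℝ) (α β : Fin m)
    (p : (Fin n → ℂ) × (Fin m → ℂ)) : ℂ :=
  wu (wubar (fun q => (F q : ℂ)) β) α p

/-- The Chern–Finsler nonlinear connection coefficients `N^β_k = h^{σ̄β}·∂_k ∂̇_σ̄ F`,
where `hinv σ β = h^{σ̄β}` are the entries of the inverse of `(h_{ασ̄})`. -/
noncomputable def Ncf {n m : ℕ} (F : (Fin n → ℂ) × (Fin m → ℂ) → ℝ)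
    (hinv : Fin m → Fin m → (Fin n → ℂ) × (Fin m → ℂ) → ℂ) (β : Fin m) (k : Fin n)
    (p : (Fin n → ℂ) × (Fin m → ℂ)) : ℂ :=
  ∑ σ, hinv σ β p * wz (wubar (fun q => (F q : ℂ)) σ) k p

/-- The horizontal derivative `δ_k g = ∂_k g − N^β_k·∂̇_β g`. -/
noncomputable def deltak {n m : ℕ} (F : (Fin n → ℂ) × (Fin m → ℂ) → ℝ)
    (hinv : Fin m → Fin m → (Fin n → ℂ) × (Fin m → ℂ) → ℂ)
    (g : (Fin n → ℂ) × (Fin m → ℂ) → ℂ) (k : Fin n)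
    (p : (Fin n → ℂ) × (Fin m → ℂ)) : ℂ :=
  wz g k p - ∑ β, Ncf F hinv β k p * wu g β p


open Topology Filter

variable {n m : ℕ}

noncomputable def DD (v : (Fin n → ℂ) × (Fin m → ℂ)) (g : (Fin n → ℂ) × (Fin m → ℂ) → ℂ)
    (p : (Fin n → ℂ) × (Fin m → ℂ)) : ℂ := fderiv ℝ g p v

section DDlem
variable {v w : (Fin n → ℂ) × (Fin m → ℂ)} {g f : (Fin n → ℂ) × (Fin m → ℂ) → ℂ}
  {p : (Fin n → ℂ) × (Fin m → ℂ)} {s : Set ((Fin n → ℂ) × (Fin m → ℂ))} {c : ℂ}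

lemma DD_congr (h : f =ᶠ[𝓝 p] g) : DD v f p = DD v g p := by
  unfold DD; rw [h.fderiv_eq]

lemma DD_const : DD v (fun _ => c) p = 0 := by simp [DD]

lemma DD_add (hf : DifferentiableAt ℝ f p) (hg : DifferentiableAt ℝ g p) :
    DD v (fun q => f q + g q) p = DD v f p + DD v g p := by
  simp [DD, fderiv_fun_add hf hg]

lemma DD_sub (hf : DifferentiableAt ℝ f p) (hg : DifferentiableAt ℝ g p) :
    DD v (fun q => f q - g q) p = DD v f p - DD v g p := by
  simp [DD, fderiv_fun_sub hf hg]

lemma DD_const_mul (hf : DifferentiableAt ℝ f p) :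
    DD v (fun q => c * f q) p = c * DD v f p := by
  simp [DD, fderiv_const_mul hf c]

lemma DD_mul (hf : DifferentiableAt ℝ f p) (hg : DifferentiableAt ℝ g p) :
    DD v (fun q => f q * g q) p = f p * DD v g p + g p * DD v f p := by
  simp [DD, fderiv_fun_mul hf hg, smul_eq_mul]

lemma DD_sum {ι : Type*} {t : Finset ι} {A : ι → (Fin n → ℂ) × (Fin m → ℂ) → ℂ}
    (h : ∀ i ∈ t, DifferentiableAt ℝ (A i) p) :
    DD v (fun q => ∑ i ∈ t, A i q) p = ∑ i ∈ t, DD v (A i) p := by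
  simp [DD, fderiv_fun_sum h]

lemma DD_contDiffOn {N M : WithTop ℕ∞} (hmn : M + 1 ≤ N) (hg : ContDiffOn ℝ N g s)
    (hs : IsOpen s) : ContDiffOn ℝ M (fun p => DD v g p) s :=
  (hg.fderiv_of_isOpen hs hmn).clm_apply contDiffOn_const

lemma DD_diffAt (hg : ContDiffOn ℝ 2 g s) (hs : IsOpen s) (hp : p ∈ s) :
    DifferentiableAt ℝ (fun q => DD v g q) p := by
  have h1 : ContDiffOn ℝ 1 (fun q => DD v g q) s :=
    DD_contDiffOn (by norm_num) hg hs
  exact ((h1 p hp).contDiffAt (hs.mem_nhds hp)).differentiableAt one_ne_zero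

lemma DD_swap (hg : ContDiffOn ℝ 2 g s) (hs : IsOpen s) (hp : p ∈ s) :
    DD v (fun q => DD w g q) p = DD w (fun q => DD v g q) p := by
  have hd : DifferentiableAt ℝ (fderiv ℝ g) p := by
    have h1 : ContDiffOn ℝ 1 (fderiv ℝ g) s := hg.fderiv_of_isOpen hs (by norm_num)
    exact ((h1 p hp).contDiffAt (hs.mem_nhds hp)).differentiableAt one_ne_zero
  have hsym : IsSymmSndFDerivAt ℝ g p :=
    ((hg p hp).contDiffAt (hs.mem_nhds hp)).isSymmSndFDerivAt (by simp)
  have key : ∀ x y : (Fin n → ℂ) × (Fin m → ℂ),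
      DD x (fun q => DD y g q) p = fderiv ℝ (fderiv ℝ g) p x y := by
    intro x y
    have : DD x (fun q => DD y g q) p
        = fderiv ℝ (fun q => (fderiv ℝ g q) y) p x := rfl
    rw [this, fderiv_clm_apply hd (differentiableAt_const y)]
    simp
  rw [key, key, hsym v w]
open BigOperators
noncomputable def Wgen (c : ℂ) (v w : (Fin n → ℂ) × (Fin m → ℂ))
    (g : (Fin n → ℂ) × (Fin m → ℂ) → ℂ) (p : (Fin n → ℂ) × (Fin m → ℂ)) : ℂ :=
  (1/2) * (DD v g p + c * DD w g p)
section Wlem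
variable {c c' : ℂ} {v w v' w' : (Fin n → ℂ) × (Fin m → ℂ)}
  {g f : (Fin n → ℂ) × (Fin m → ℂ) → ℂ}
  {p : (Fin n → ℂ) × (Fin m → ℂ)} {s : Set ((Fin n → ℂ) × (Fin m → ℂ))}

lemma Wgen_congr (h : f =ᶠ[𝓝 p] g) : Wgen c v w f p = Wgen c v w g p := by
  unfold Wgen; rw [DD_congr h, DD_congr h]

lemma Wgen_const {d : ℂ} : Wgen c v w (fun _ => d) p = 0 := by
  simp [Wgen, DD_const]

lemma Wgen_mul (hf : DifferentiableAt ℝ f p) (hg : DifferentiableAt ℝ g p) :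
    Wgen c v w (fun q => f q * g q) p
      = f p * Wgen c v w g p + g p * Wgen c v w f p := by
  simp only [Wgen, DD_mul hf hg]; ring

lemma Wgen_sub (hf : DifferentiableAt ℝ f p) (hg : DifferentiableAt ℝ g p) :
    Wgen c v w (fun q => f q - g q) p = Wgen c v w f p - Wgen c v w g p := by
  simp only [Wgen, DD_sub hf hg]; ring

lemma Wgen_sum {ι : Type*} {t : Finset ι} {A : ι → (Fin n → ℂ) × (Fin m → ℂ) → ℂ}
    (h : ∀ i ∈ t, DifferentiableAt ℝ (A i) p) :
    Wgen c v w (fun q => ∑ i ∈ t, A i q) p = ∑ i ∈ t, Wgen c v w (A i) p := by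
  simp only [Wgen, DD_sum h, Finset.mul_sum, ← Finset.sum_add_distrib]

lemma Wgen_contDiffOn {N M : WithTop ℕ∞} (hmn : M + 1 ≤ N) (hg : ContDiffOn ℝ N g s)
    (hs : IsOpen s) : ContDiffOn ℝ M (fun p => Wgen c v w g p) s := by
  have h1 := DD_contDiffOn (v := v) hmn hg hs
  have h2 := DD_contDiffOn (v := w) hmn hg hs
  exact contDiffOn_const.mul (h1.add (contDiffOn_const.mul h2))

lemma Wgen_comm (hg : ContDiffOn ℝ 2 g s) (hs : IsOpen s) (hp : p ∈ s) :
    Wgen c v w (fun q => Wgen c' v' w' g q) p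
      = Wgen c' v' w' (fun q => Wgen c v w g q) p := by
  have d1 : DifferentiableAt ℝ (fun q => DD v' g q) p := DD_diffAt hg hs hp
  have d2 : DifferentiableAt ℝ (fun q => DD w' g q) p := DD_diffAt hg hs hp
  have d3 : DifferentiableAt ℝ (fun q => DD v g q) p := DD_diffAt hg hs hp
  have d4 : DifferentiableAt ℝ (fun q => DD w g q) p := DD_diffAt hg hs hp
  have expand : ∀ (x : (Fin n → ℂ) × (Fin m → ℂ)) (e : ℂ) (y z : (Fin n → ℂ) × (Fin m → ℂ)),
      DifferentiableAt ℝ (fun q => DD y g q) p → DifferentiableAt ℝ (fun q => DD z g q) p →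
      DD x (fun q => Wgen e y z g q) p
        = (1/2) * (DD x (fun q => DD y g q) p + e * DD x (fun q => DD z g q) p) := by
    intro x e y z hy hz
    have : (fun q => Wgen e y z g q) = fun q => (1/2 : ℂ) * (DD y g q + e * DD z g q) := rfl
    rw [this, DD_const_mul (hy.fun_add (hz.const_mul e)),
      DD_add hy (hz.const_mul e), DD_const_mul hz]
  have outer : ∀ (e : ℂ) (y z : (Fin n → ℂ) × (Fin m → ℂ))
      (h : (Fin n → ℂ) × (Fin m → ℂ) → ℂ),
      Wgen e y z h p = (1/2) * (DD y h p + e * DD z h p) := fun _ _ _ _ => rfl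
  rw [outer c v w, outer c' v' w', expand v c' v' w' d1 d2, expand w c' v' w' d1 d2,
    expand v' c v w d3 d4, expand w' c v w d3 d4,
    DD_swap (v := v) (w := v') hg hs hp, DD_swap (v := v) (w := w') hg hs hp,
    DD_swap (v := w) (w := v') hg hs hp, DD_swap (v := w) (w := w') hg hs hp]
  ring

end Wlem

lemma wz_eq (g : (Fin n → ℂ) × (Fin m → ℂ) → ℂ) (k : Fin n) :
    wz g k = Wgen (-Complex.I) (Pi.single k 1, 0) (Pi.single k Complex.I, 0) g := by
  funext p; simp only [wz, Wgen, DD]; try ring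

lemma wu_eq (g : (Fin n → ℂ) × (Fin m → ℂ) → ℂ) (α : Fin m) :
    wu g α = Wgen (-Complex.I) (0, Pi.single α 1) (0, Pi.single α Complex.I) g := by
  funext p; simp only [wu, Wgen, DD]; try ring

lemma wubar_eq (g : (Fin n → ℂ) × (Fin m → ℂ) → ℂ) (α : Fin m) :
    wubar g α = Wgen Complex.I (0, Pi.single α 1) (0, Pi.single α Complex.I) g := by
  funext p; simp only [wubar, Wgen, DD]; try ring

lemma pull_lemma {m' : ℕ} (Iv : Fin m' → Fin m' → ℂ) (σ : Fin m')
    (M : Fin m' → Fin m' → ℂ) (B : Fin m' → ℂ) :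
    ∑ τ, (-∑ β, ∑ γ, Iv τ β * M β γ * Iv γ σ) * B τ
      = -∑ β, ∑ γ, (∑ ρ, Iv ρ β * B ρ) * M β γ * Iv γ σ := by
  simp_rw [neg_mul, Finset.sum_neg_distrib, Finset.sum_mul]
  congr 1
  rw [Finset.sum_comm]
  exact Finset.sum_congr rfl fun β _ => (Finset.sum_comm).trans
    (Finset.sum_congr rfl fun γ _ => Finset.sum_congr rfl fun τ _ => by ring)

lemma solve_lemma {m' : ℕ} (H Iv Wh Wi : Fin m' → Fin m' → ℂ)
    (hIH : ∀ α γ, ∑ β, Iv α β * H β γ = if α = γ then 1 else 0)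
    (hrel : ∀ α γ, (∑ β, (Wh α β * Iv β γ + H α β * Wi β γ)) = 0) :
    ∀ τ γ, Wi τ γ = -∑ α, ∑ β, Iv τ α * Wh α β * Iv β γ := by
  intro τ γ
  have h1 : ∀ α, ∑ β, H α β * Wi β γ = -∑ β, Wh α β * Iv β γ := by
    intro α
    have := hrel α γ
    rw [Finset.sum_add_distrib] at this
    linear_combination this
  calc Wi τ γ = ∑ β, (if τ = β then 1 else 0) * Wi β γ := by
        simp [ite_mul]
    _ = ∑ β, (∑ α, Iv τ α * H α β) * Wi β γ := by
        refine Finset.sum_congr rfl fun β _ => ?_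
        rw [hIH τ β]
    _ = ∑ α, Iv τ α * ∑ β, H α β * Wi β γ := by
        simp_rw [Finset.sum_mul, Finset.mul_sum]
        rw [Finset.sum_comm]
        exact Finset.sum_congr rfl fun α _ => Finset.sum_congr rfl fun β _ => by ring
    _ = ∑ α, Iv τ α * -∑ β, Wh α β * Iv β γ := by
        exact Finset.sum_congr rfl fun α _ => by rw [h1 α]
    _ = -∑ α, ∑ β, Iv τ α * Wh α β * Iv β γ := by
        simp_rw [mul_neg, Finset.sum_neg_distrib, Finset.mul_sum]
        congr 1
        exact Finset.sum_congr rfl fun α _ => Finset.sum_congr rfl fun β _ => by ring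

lemma key_alg {n' m' : ℕ} (Iv : Fin m' → Fin m' → ℂ) (A : Fin n' → Fin m' → ℂ)
    (Ez : Fin n' → Fin m' → Fin m' → ℂ) (Cc : Fin m' → Fin m' → Fin m' → ℂ)
    (D2 : Fin n' → Fin n' → Fin m' → ℂ)
    (hD2 : ∀ k h τ, D2 k h τ = D2 h k τ)
    (hC : ∀ α β γ, Cc α β γ = Cc β α γ)
    (k h : Fin n') (σ : Fin m') :
    (∑ τ, ((-∑ β, ∑ γ, Iv τ β * Ez k β γ * Iv γ σ) * A h τ + Iv τ σ * D2 k h τ)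
      - ∑ α, (∑ ρ, Iv ρ α * A k ρ) *
          (∑ τ, ((-∑ β, ∑ γ, Iv τ β * Cc α β γ * Iv γ σ) * A h τ + Iv τ σ * Ez h α τ)))
    = (∑ τ, ((-∑ β, ∑ γ, Iv τ β * Ez h β γ * Iv γ σ) * A k τ + Iv τ σ * D2 h k τ)
      - ∑ α, (∑ ρ, Iv ρ α * A h ρ) *
          (∑ τ, ((-∑ β, ∑ γ, Iv τ β * Cc α β γ * Iv γ σ) * A k τ + Iv τ σ * Ez k α τ))) := by
  have main : ∀ k h : Fin n',
      (∑ τ, ((-∑ β, ∑ γ, Iv τ β * Ez k β γ * Iv γ σ) * A h τ + Iv τ σ * D2 k h τ)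
        - ∑ α, (∑ ρ, Iv ρ α * A k ρ) *
            (∑ τ, ((-∑ β, ∑ γ, Iv τ β * Cc α β γ * Iv γ σ) * A h τ + Iv τ σ * Ez h α τ)))
      = (∑ τ, Iv τ σ * D2 k h τ)
        - (∑ β, ∑ γ, (∑ ρ, Iv ρ β * A h ρ) * Ez k β γ * Iv γ σ)
        - (∑ α, ∑ τ, (∑ ρ, Iv ρ α * A k ρ) * (Iv τ σ * Ez h α τ))
        + (∑ α, ∑ β, ∑ γ, (∑ ρ, Iv ρ α * A k ρ) *
            ((∑ ρ, Iv ρ β * A h ρ) * Cc α β γ * Iv γ σ)) := by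
    intro k h
    rw [Finset.sum_add_distrib, pull_lemma]
    have inner : ∀ α : Fin m',
        (∑ ρ, Iv ρ α * A k ρ) *
          (∑ τ, ((-∑ β, ∑ γ, Iv τ β * Cc α β γ * Iv γ σ) * A h τ + Iv τ σ * Ez h α τ))
        = -(∑ β, ∑ γ, (∑ ρ, Iv ρ α * A k ρ) *
              ((∑ ρ, Iv ρ β * A h ρ) * Cc α β γ * Iv γ σ))
          + ∑ τ, (∑ ρ, Iv ρ α * A k ρ) * (Iv τ σ * Ez h α τ) := by
      intro α
      rw [Finset.sum_add_distrib, pull_lemma, mul_add, mul_neg]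
      simp_rw [Finset.mul_sum]
    simp_rw [inner, Finset.sum_add_distrib, Finset.sum_neg_distrib]
    ring
  rw [main k h, main h k]
  have t1 : (∑ τ, Iv τ σ * D2 k h τ) = ∑ τ, Iv τ σ * D2 h k τ :=
    Finset.sum_congr rfl fun τ _ => by rw [hD2]
  have t23 : (∑ β, ∑ γ, (∑ ρ, Iv ρ β * A h ρ) * Ez k β γ * Iv γ σ)
      = ∑ α, ∑ τ, (∑ ρ, Iv ρ α * A h ρ) * (Iv τ σ * Ez k α τ) :=
    Finset.sum_congr rfl fun β _ => Finset.sum_congr rfl fun γ _ => by ring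
  have t32 : (∑ α, ∑ τ, (∑ ρ, Iv ρ α * A k ρ) * (Iv τ σ * Ez h α τ))
      = ∑ β, ∑ γ, (∑ ρ, Iv ρ β * A k ρ) * Ez h β γ * Iv γ σ :=
    Finset.sum_congr rfl fun β _ => Finset.sum_congr rfl fun γ _ => by ring
  have t4 : (∑ α, ∑ β, ∑ γ, (∑ ρ, Iv ρ α * A k ρ) *
        ((∑ ρ, Iv ρ β * A h ρ) * Cc α β γ * Iv γ σ))
      = ∑ α, ∑ β, ∑ γ, (∑ ρ, Iv ρ α * A h ρ) *
        ((∑ ρ, Iv ρ β * A k ρ) * Cc α β γ * Iv γ σ) := by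
    rw [Finset.sum_comm]
    exact Finset.sum_congr rfl fun α _ => Finset.sum_congr rfl fun β _ =>
      Finset.sum_congr rfl fun γ _ => by rw [hC β α γ]; ring
  rw [t1, t23, t32, t4]
  ring

section MainCtx
variable {n m : ℕ}

def Gf (F : (Fin n → ℂ) × (Fin m → ℂ) → ℝ) : (Fin n → ℂ) × (Fin m → ℂ) → ℂ :=
  fun q => (F q : ℂ)

noncomputable def MatH (hmet' : Fin m → Fin m → (Fin n → ℂ) × (Fin m → ℂ) → ℂ)
    (p : (Fin n → ℂ) × (Fin m → ℂ)) : Matrix (Fin m) (Fin m) ℂ :=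
  Matrix.of fun α β => hmet' α β p

variable {F : (Fin n → ℂ) × (Fin m → ℂ) → ℝ} {S : Set ((Fin n → ℂ) × (Fin m → ℂ))}
  {hmet' : Fin m → Fin m → (Fin n → ℂ) × (Fin m → ℂ) → ℂ}
  {p : (Fin n → ℂ) × (Fin m → ℂ)}

lemma Gf_contDiffOn (hF : ContDiffOn ℝ (⊤ : ℕ∞) F S) : ContDiffOn ℝ 6 (Gf F) S := by
  have h6 : ContDiffOn ℝ 6 F S := hF.of_le (WithTop.coe_le_coe.mpr le_top)
  exact (Complex.ofRealCLM.contDiff.comp_contDiffOn h6 : )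

lemma cd_diffAt {f : (Fin n → ℂ) × (Fin m → ℂ) → ℂ} {N : WithTop ℕ∞} (hN : 1 ≤ N)
    (h : ContDiffOn ℝ N f S) (hS : IsOpen S) (hp : p ∈ S) : DifferentiableAt ℝ f p :=
  ((h p hp).contDiffAt (hS.mem_nhds hp)).differentiableAt (zero_lt_one.trans_le hN).ne'

lemma det_cd {M : (Fin n → ℂ) × (Fin m → ℂ) → Matrix (Fin m) (Fin m) ℂ}
    (hM : ∀ i j, ContDiffOn ℝ 4 (fun p => M p i j) S) :
    ContDiffOn ℝ 4 (fun p => (M p).det) S := by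
  simp_rw [Matrix.det_apply]
  apply ContDiffOn.sum; intro σ _
  have hc : ∀ q, (Equiv.Perm.sign σ • ∏ i, M q (σ i) i)
      = ((Equiv.Perm.sign σ : ℤ) : ℂ) * ∏ i, M q (σ i) i := by
    intro q; rw [Units.smul_def, zsmul_eq_mul]
  simp_rw [hc]
  exact contDiffOn_const.mul (contDiffOn_prod fun i _ => hM (σ i) i)

lemma adj_cd (hmc : ∀ α β, ContDiffOn ℝ 4 (hmet' α β) S) (β γ : Fin m) :
    ContDiffOn ℝ 4 (fun p => (MatH hmet' p).adjugate β γ) S := by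
  simp_rw [Matrix.adjugate_apply]
  apply det_cd; intro i j
  simp_rw [Matrix.updateRow_apply]
  by_cases hi : i = γ
  · simp only [hi, if_pos rfl]; exact contDiffOn_const
  · simp only [if_neg hi]; exact hmc i j


variable {hinv' : Fin m → Fin m → (Fin n → ℂ) × (Fin m → ℂ) → ℂ}

lemma matHone (hspec : ∀ p ∈ S, ∀ α γ, ∑ β, hmet' α β p * hinv' β γ p = if α = γ then 1 else 0)
    (hp : p ∈ S) : MatH hmet' p * MatH hinv' p = 1 := by
  ext α γ
  simp only [Matrix.mul_apply, MatH, Matrix.of_apply, Matrix.one_apply]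
  exact hspec p hp α γ

lemma det_ne (hspec : ∀ p ∈ S, ∀ α γ, ∑ β, hmet' α β p * hinv' β γ p = if α = γ then 1 else 0)
    (hp : p ∈ S) : (MatH hmet' p).det ≠ 0 :=
  (Matrix.isUnit_det_of_right_inverse (matHone hspec hp)).ne_zero

noncomputable def JinvH (hmet' : Fin m → Fin m → (Fin n → ℂ) × (Fin m → ℂ) → ℂ) (β γ : Fin m)
    (p : (Fin n → ℂ) × (Fin m → ℂ)) : ℂ :=
  ((MatH hmet' p).det)⁻¹ * (MatH hmet' p).adjugate β γ

lemma Jinv_cd (hmc : ∀ α β, ContDiffOn ℝ 4 (hmet' α β) S)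
    (hspec : ∀ p ∈ S, ∀ α γ, ∑ β, hmet' α β p * hinv' β γ p = if α = γ then 1 else 0)
    (β γ : Fin m) : ContDiffOn ℝ 4 (JinvH hmet' β γ) S := by
  have hdet : ContDiffOn ℝ 4 (fun p => (MatH hmet' p).det) S := det_cd (fun i j => hmc i j)
  exact (hdet.inv (fun q hq => det_ne hspec hq)).mul (adj_cd hmc β γ)

lemma hinv_eq (hspec : ∀ p ∈ S, ∀ α γ, ∑ β, hmet' α β p * hinv' β γ p = if α = γ then 1 else 0)
    (hp : p ∈ S) (β γ : Fin m) : hinv' β γ p = JinvH hmet' β γ p := by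
  have h1 := Matrix.inv_eq_right_inv (matHone hspec hp)
  have h2 : hinv' β γ p = (MatH hmet' p)⁻¹ β γ := by rw [h1]; rfl
  rw [h2, Matrix.inv_def, Ring.inverse_eq_inv, Matrix.smul_apply, smul_eq_mul, JinvH]

lemma hinv_eventuallyEq (hS : IsOpen S)
    (hspec : ∀ p ∈ S, ∀ α γ, ∑ β, hmet' α β p * hinv' β γ p = if α = γ then 1 else 0)
    (hp : p ∈ S) (β γ : Fin m) : hinv' β γ =ᶠ[𝓝 p] JinvH hmet' β γ :=
  Filter.eventuallyEq_of_mem (hS.mem_nhds hp) (fun q hq => hinv_eq hspec hq β γ)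

lemma hinv_diffAt (hS : IsOpen S) (hmc : ∀ α β, ContDiffOn ℝ 4 (hmet' α β) S)
    (hspec : ∀ p ∈ S, ∀ α γ, ∑ β, hmet' α β p * hinv' β γ p = if α = γ then 1 else 0)
    (hp : p ∈ S) (β γ : Fin m) : DifferentiableAt ℝ (hinv' β γ) p :=
  (hinv_eventuallyEq hS hspec hp β γ).differentiableAt_iff.mpr
    (cd_diffAt (by norm_num) (Jinv_cd hmc hspec β γ) hS hp)

lemma Wgen_hinv (hS : IsOpen S) (hmc : ∀ α β, ContDiffOn ℝ 4 (hmet' α β) S)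
    (hspec : ∀ p ∈ S, ∀ α γ, ∑ β, hmet' α β p * hinv' β γ p = if α = γ then 1 else 0)
    (hp : p ∈ S) (c : ℂ) (v w : (Fin n → ℂ) × (Fin m → ℂ)) (τ γ : Fin m) :
    Wgen c v w (hinv' τ γ) p
      = -∑ α, ∑ β, hinv' τ α p * Wgen c v w (hmet' α β) p * hinv' β γ p := by
  have hIH : ∀ α γ, ∑ β, hinv' α β p * hmet' β γ p = if α = γ then 1 else 0 := by
    intro α γ
    have h1 : MatH hinv' p * MatH hmet' p = 1 :=
      mul_eq_one_comm.mp (matHone hspec hp)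
    have := congrFun (congrFun h1 α) γ
    simpa [Matrix.mul_apply, MatH, Matrix.one_apply] using this
  have hdm : ∀ α β, DifferentiableAt ℝ (hmet' α β) p :=
    fun α β => cd_diffAt (by norm_num) (hmc α β) hS hp
  have hdi : ∀ β γ, DifferentiableAt ℝ (hinv' β γ) p := fun β γ =>
    hinv_diffAt hS hmc hspec hp β γ
  have hrel : ∀ α γ, (∑ β, (Wgen c v w (hmet' α β) p * hinv' β γ p
      + hmet' α β p * Wgen c v w (hinv' β γ) p)) = 0 := by
    intro α γ
    have hconst : (fun q => ∑ β, hmet' α β q * hinv' β γ q)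
        =ᶠ[𝓝 p] (fun _ => if α = γ then (1:ℂ) else 0) :=
      Filter.eventuallyEq_of_mem (hS.mem_nhds hp) (fun q hq => hspec q hq α γ)
    have h0 : Wgen c v w (fun q => ∑ β, hmet' α β q * hinv' β γ q) p = 0 := by
      rw [Wgen_congr hconst]; exact Wgen_const
    rw [Wgen_sum (fun β _ => (hdm α β).fun_mul (hdi β γ))] at h0
    rw [← h0]
    exact Finset.sum_congr rfl fun β _ => by
      rw [Wgen_mul (hdm α β) (hdi β γ)]; ring
  exact solve_lemma (fun α β => hmet' α β p) (fun α β => hinv' α β p)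
    (fun α β => Wgen c v w (hmet' α β) p) (fun τ γ => Wgen c v w (hinv' τ γ) p)
    hIH hrel τ γ


section Part1
variable {n m : ℕ} {F : (Fin n → ℂ) × (Fin m → ℂ) → ℝ}
  {S : Set ((Fin n → ℂ) × (Fin m → ℂ))}
  {hinv' : Fin m → Fin m → (Fin n → ℂ) × (Fin m → ℂ) → ℂ}
  {p : (Fin n → ℂ) × (Fin m → ℂ)}

lemma expand1 (hS : IsOpen S) (hF : ContDiffOn ℝ (⊤ : ℕ∞) F S)
    (hspec : ∀ p ∈ S, ∀ α γ, ∑ β, hmet F α β p * hinv' β γ p = if α = γ then 1 else 0)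
    (hp : p ∈ S) (k h : Fin n) (σ : Fin m) :
    deltak F hinv' (Ncf F hinv' σ h) k p =
    (∑ τ, ((-∑ β, ∑ γ, hinv' τ β p * wz (hmet F β γ) k p * hinv' γ σ p)
            * wz (wubar (Gf F) τ) h p
          + hinv' τ σ p * wz (wz (wubar (Gf F) τ) h) k p)
      - ∑ α, (∑ ρ, hinv' ρ α p * wz (wubar (Gf F) ρ) k p) *
          (∑ τ, ((-∑ β, ∑ γ, hinv' τ β p * wu (hmet F β γ) α p * hinv' γ σ p)
              * wz (wubar (Gf F) τ) h p
            + hinv' τ σ p * wz (hmet F α τ) h p))) := by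
  have hG6 : ContDiffOn ℝ 6 (Gf F) S := Gf_contDiffOn hF
  have hwub : ∀ τ, ContDiffOn ℝ 5 (wubar (Gf F) τ) S := fun τ => by
    rw [wubar_eq]; exact Wgen_contDiffOn (by norm_num) hG6 hS
  have hwub2 : ∀ τ, ContDiffOn ℝ 2 (wubar (Gf F) τ) S := fun τ =>
    (hwub τ).of_le (by norm_num)
  have hA : ∀ (h' : Fin n) τ, ContDiffOn ℝ 4 (wz (wubar (Gf F) τ) h') S := fun h' τ => by
    rw [wz_eq]; exact Wgen_contDiffOn (by norm_num) (hwub τ) hS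
  have hmc : ∀ α β, ContDiffOn ℝ 4 (hmet F α β) S := fun α β => by
    have hh : hmet F α β = wu (wubar (Gf F) β) α := rfl
    rw [hh, wu_eq]; exact Wgen_contDiffOn (by norm_num) (hwub β) hS
  have dA : ∀ (h' : Fin n) τ, DifferentiableAt ℝ (wz (wubar (Gf F) τ) h') p :=
    fun h' τ => cd_diffAt (by norm_num) (hA h' τ) hS hp
  have dH : ∀ τ σ', DifferentiableAt ℝ (hinv' τ σ') p := fun τ σ' =>
    hinv_diffAt hS hmc hspec hp τ σ'
  have eNcf : ∀ (c : ℂ) (vv ww : (Fin n → ℂ) × (Fin m → ℂ)) (σ' : Fin m) (h' : Fin n),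
      Wgen c vv ww (Ncf F hinv' σ' h') p
      = ∑ τ, (hinv' τ σ' p * Wgen c vv ww (wz (wubar (Gf F) τ) h') p
          + wz (wubar (Gf F) τ) h' p * Wgen c vv ww (hinv' τ σ') p) := by
    intro c vv ww σ' h'
    have hrw : Ncf F hinv' σ' h' = fun q => ∑ τ, hinv' τ σ' q * wz (wubar (Gf F) τ) h' q := rfl
    rw [hrw, Wgen_sum (fun τ _ => (dH τ σ').fun_mul (dA h' τ))]
    exact Finset.sum_congr rfl fun τ _ => Wgen_mul (dH τ σ') (dA h' τ)
  have comm1 : ∀ (α τ : Fin m) (h' : Fin n),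
      wu (wz (wubar (Gf F) τ) h') α p = wz (hmet F α τ) h' p := by
    intro α τ h'
    have hh : hmet F α τ = wu (wubar (Gf F) τ) α := rfl
    rw [hh, wu_eq, wz_eq, wz_eq, wu_eq]
    exact Wgen_comm (hwub2 τ) hS hp
  have comm2 : ∀ (τ : Fin m) (k' h' : Fin n),
      wz (wz (wubar (Gf F) τ) h') k' p = wz (wz (wubar (Gf F) τ) k') h' p := by
    intro τ k' h'
    rw [wz_eq (wubar (Gf F) τ) h', wz_eq (wubar (Gf F) τ) k', wz_eq, wz_eq]
    exact Wgen_comm (hwub2 τ) hS hp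
  have ewz : wz (Ncf F hinv' σ h) k p
      = ∑ τ, (hinv' τ σ p * wz (wz (wubar (Gf F) τ) h) k p
          + wz (wubar (Gf F) τ) h p
            * (-∑ β, ∑ γ, hinv' τ β p * wz (hmet F β γ) k p * hinv' γ σ p)) := by
    rw [wz_eq, eNcf]
    simp_rw [Wgen_hinv hS hmc hspec hp, ← wz_eq]
  have ewu : ∀ α : Fin m, wu (Ncf F hinv' σ h) α p
      = ∑ τ, (hinv' τ σ p * wz (hmet F α τ) h p
          + wz (wubar (Gf F) τ) h p
            * (-∑ β, ∑ γ, hinv' τ β p * wu (hmet F β γ) α p * hinv' γ σ p)) := by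
    intro α
    rw [wu_eq, eNcf]
    simp_rw [Wgen_hinv hS hmc hspec hp, ← wu_eq, comm1]
  simp only [deltak, ewz, ewu, Ncf]
  congr 1
  · exact Finset.sum_congr rfl fun τ _ => by rw [comm2 τ k h]; ring
  · refine Finset.sum_congr rfl fun α _ => ?_
    congr 1
    exact Finset.sum_congr rfl fun τ _ => by ring

lemma part1 (hS : IsOpen S) (hF : ContDiffOn ℝ (⊤ : ℕ∞) F S)
    (hspec : ∀ p ∈ S, ∀ α γ, ∑ β, hmet F α β p * hinv' β γ p = if α = γ then 1 else 0)
    (hp : p ∈ S) (k h : Fin n) (σ : Fin m) :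
    deltak F hinv' (Ncf F hinv' σ h) k p = deltak F hinv' (Ncf F hinv' σ k) h p := by
  have hG6 : ContDiffOn ℝ 6 (Gf F) S := Gf_contDiffOn hF
  have hwub : ∀ τ, ContDiffOn ℝ 5 (wubar (Gf F) τ) S := fun τ => by
    rw [wubar_eq]; exact Wgen_contDiffOn (by norm_num) hG6 hS
  have hwub2 : ∀ τ, ContDiffOn ℝ 2 (wubar (Gf F) τ) S := fun τ =>
    (hwub τ).of_le (by norm_num)
  have comm2 : ∀ (τ : Fin m) (k' h' : Fin n),
      wz (wz (wubar (Gf F) τ) h') k' p = wz (wz (wubar (Gf F) τ) k') h' p := by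
    intro τ k' h'
    rw [wz_eq (wubar (Gf F) τ) h', wz_eq (wubar (Gf F) τ) k', wz_eq, wz_eq]
    exact Wgen_comm (hwub2 τ) hS hp
  have comm3 : ∀ (α β γ : Fin m),
      wu (hmet F β γ) α p = wu (hmet F α γ) β p := by
    intro α β γ
    have h1 : hmet F β γ = wu (wubar (Gf F) γ) β := rfl
    have h2 : hmet F α γ = wu (wubar (Gf F) γ) α := rfl
    rw [h1, h2, wu_eq (wubar (Gf F) γ) β, wu_eq (wubar (Gf F) γ) α, wu_eq, wu_eq]
    exact Wgen_comm (hwub2 γ) hS hp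
  rw [expand1 hS hF hspec hp k h σ, expand1 hS hF hspec hp h k σ]
  exact key_alg (fun τ β => hinv' τ β p) (fun h' τ => wz (wubar (Gf F) τ) h' p)
    (fun k' β γ => wz (hmet F β γ) k' p) (fun α β γ => wu (hmet F β γ) α p)
    (fun k' h' τ => wz (wz (wubar (Gf F) τ) h') k' p)
    (fun k' h' τ => comm2 τ k' h') comm3 k h σ

end Part1

lemma key_alg2 {n' m' : ℕ} (N : Fin m' → Fin n' → ℂ) (U : Fin m' → ℂ)
    (ZZ : Fin n' → Fin m' → Fin n' → ℂ) (WW : Fin m' → Fin m' → Fin n' → ℂ)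
    (S2 : Fin n' → Fin n' → ℂ) (M : Fin n' → Fin m' → ℂ) (V : Fin m' → Fin m' → ℂ)
    (hS2 : ∀ k h, S2 k h = S2 h k) (hV : ∀ α β, V α β = V β α)
    (hP1 : ∀ k h α, ZZ k α h - ∑ β, N β k * WW β α h = ZZ h α k - ∑ β, N β h * WW β α k)
    (k h : Fin n') :
    S2 k h - (∑ α, (ZZ k α h * U α + N α h * M k α))
      - ∑ β, N β k * (M h β - ∑ α, (WW β α h * U α + N α h * V α β))
    = S2 h k - (∑ α, (ZZ h α k * U α + N α k * M h α))
      - ∑ β, N β h * (M k β - ∑ α, (WW β α k * U α + N α k * V α β)) := by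
  have swap : ∀ k h : Fin n', (∑ α, (∑ β, N β k * WW β α h) * U α)
      = ∑ β, ∑ α, N β k * (WW β α h * U α) := by
    intro k h
    simp_rw [Finset.sum_mul]
    rw [Finset.sum_comm]
    exact Finset.sum_congr rfl fun _ _ => Finset.sum_congr rfl fun _ _ => by ring
  have main : ∀ k h : Fin n',
      S2 k h - (∑ α, (ZZ k α h * U α + N α h * M k α))
        - ∑ β, N β k * (M h β - ∑ α, (WW β α h * U α + N α h * V α β))
      = S2 k h - (∑ α, (ZZ k α h - ∑ β, N β k * WW β α h) * U α)
        - (∑ α, N α h * M k α) - (∑ β, N β k * M h β)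
        + ∑ β, ∑ α, N β k * (N α h * V α β) := by
    intro k h
    simp_rw [Finset.sum_add_distrib, mul_sub, mul_add, Finset.mul_sum,
      Finset.sum_sub_distrib, sub_mul]
    simp_rw [Finset.sum_add_distrib, Finset.sum_sub_distrib]
    rw [swap k h]
    ring
  rw [main k h, main h k, hS2 k h]
  have tP1 : (∑ α, (ZZ k α h - ∑ β, N β k * WW β α h) * U α)
      = ∑ α, (ZZ h α k - ∑ β, N β h * WW β α k) * U α :=
    Finset.sum_congr rfl fun α _ => by rw [hP1 k h α]
  have tV : (∑ β, ∑ α, N β k * (N α h * V α β))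
      = ∑ β, ∑ α, N β h * (N α k * V α β) := by
    rw [Finset.sum_comm]
    exact Finset.sum_congr rfl fun β _ => Finset.sum_congr rfl fun α _ => by
      rw [hV α β]; ring
  rw [tP1, tV]
  ring


section Part2
variable {n m : ℕ} {F : (Fin n → ℂ) × (Fin m → ℂ) → ℝ}
  {S : Set ((Fin n → ℂ) × (Fin m → ℂ))}
  {hinv' : Fin m → Fin m → (Fin n → ℂ) × (Fin m → ℂ) → ℂ}
  {p : (Fin n → ℂ) × (Fin m → ℂ)}

lemma expand2 (hS : IsOpen S) (hF : ContDiffOn ℝ (⊤ : ℕ∞) F S)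
    (hspec : ∀ p ∈ S, ∀ α γ, ∑ β, hmet F α β p * hinv' β γ p = if α = γ then 1 else 0)
    (hp : p ∈ S) {f : (Fin n → ℂ) × (Fin m → ℂ) → ℂ} (hf : ContDiffOn ℝ 2 f S)
    (k h : Fin n) :
    deltak F hinv' (deltak F hinv' f h) k p
    = wz (wz f h) k p - (∑ α, (wz (Ncf F hinv' α h) k p * wu f α p
          + Ncf F hinv' α h p * wu (wz f k) α p))
      - ∑ β, Ncf F hinv' β k p * (wu (wz f h) β p
          - ∑ α, (wu (Ncf F hinv' α h) β p * wu f α p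
              + Ncf F hinv' α h p * wu (wu f α) β p)) := by
  have hG6 : ContDiffOn ℝ 6 (Gf F) S := Gf_contDiffOn hF
  have hwub : ∀ τ, ContDiffOn ℝ 5 (wubar (Gf F) τ) S := fun τ => by
    rw [wubar_eq]; exact Wgen_contDiffOn (by norm_num) hG6 hS
  have hA : ∀ (h' : Fin n) τ, ContDiffOn ℝ 4 (wz (wubar (Gf F) τ) h') S := fun h' τ => by
    rw [wz_eq]; exact Wgen_contDiffOn (by norm_num) (hwub τ) hS
  have hmc : ∀ α β, ContDiffOn ℝ 4 (hmet F α β) S := fun α β => by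
    have hh : hmet F α β = wu (wubar (Gf F) β) α := rfl
    rw [hh, wu_eq]; exact Wgen_contDiffOn (by norm_num) (hwub β) hS
  have dA : ∀ (h' : Fin n) τ, DifferentiableAt ℝ (wz (wubar (Gf F) τ) h') p :=
    fun h' τ => cd_diffAt (by norm_num) (hA h' τ) hS hp
  have dH : ∀ τ σ', DifferentiableAt ℝ (hinv' τ σ') p := fun τ σ' =>
    hinv_diffAt hS hmc hspec hp τ σ'
  have dN : ∀ (α : Fin m) (h' : Fin n), DifferentiableAt ℝ (Ncf F hinv' α h') p := by
    intro α h'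
    have hrw : Ncf F hinv' α h' = fun q => ∑ τ, hinv' τ α q * wz (wubar (Gf F) τ) h' q := rfl
    rw [hrw]
    exact DifferentiableAt.fun_sum fun τ _ => (dH τ α).fun_mul (dA h' τ)
  have hwz1 : ∀ h' : Fin n, ContDiffOn ℝ 1 (wz f h') S := fun h' => by
    rw [wz_eq]; exact Wgen_contDiffOn (by norm_num) hf hS
  have hwu1 : ∀ α : Fin m, ContDiffOn ℝ 1 (wu f α) S := fun α => by
    rw [wu_eq]; exact Wgen_contDiffOn (by norm_num) hf hS
  have dwz : ∀ h' : Fin n, DifferentiableAt ℝ (wz f h') p := fun h' =>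
    cd_diffAt (by norm_num) (hwz1 h') hS hp
  have dwu : ∀ α : Fin m, DifferentiableAt ℝ (wu f α) p := fun α =>
    cd_diffAt (by norm_num) (hwu1 α) hS hp
  have dSum : DifferentiableAt ℝ (fun q => ∑ α, Ncf F hinv' α h q * wu f α q) p :=
    DifferentiableAt.fun_sum fun α _ => (dN α h).fun_mul (dwu α)
  have hD : deltak F hinv' f h
      = fun q => wz f h q - ∑ α, Ncf F hinv' α h q * wu f α q := rfl
  have eW : ∀ (c : ℂ) (vv ww : (Fin n → ℂ) × (Fin m → ℂ)),
      Wgen c vv ww (deltak F hinv' f h) p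
      = Wgen c vv ww (wz f h) p - ∑ α, (Ncf F hinv' α h p * Wgen c vv ww (wu f α) p
          + wu f α p * Wgen c vv ww (Ncf F hinv' α h) p) := by
    intro c vv ww
    rw [hD, Wgen_sub (dwz h) dSum, Wgen_sum (fun α _ => (dN α h).fun_mul (dwu α))]
    congr 1
    exact Finset.sum_congr rfl fun α _ => Wgen_mul (dN α h) (dwu α)
  have commf : ∀ (k' : Fin n) (α : Fin m), wz (wu f α) k' p = wu (wz f k') α p := by
    intro k' α
    rw [wu_eq f α, wz_eq f k', wz_eq, wu_eq]
    exact Wgen_comm hf hS hp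
  have ewz : wz (deltak F hinv' f h) k p
      = wz (wz f h) k p - ∑ α, (Ncf F hinv' α h p * wu (wz f k) α p
          + wu f α p * wz (Ncf F hinv' α h) k p) := by
    rw [wz_eq (deltak F hinv' f h) k, eW]
    simp_rw [← wz_eq, commf]
  have ewu : ∀ β : Fin m, wu (deltak F hinv' f h) β p
      = wu (wz f h) β p - ∑ α, (Ncf F hinv' α h p * wu (wu f α) β p
          + wu f α p * wu (Ncf F hinv' α h) β p) := by
    intro β
    rw [wu_eq (deltak F hinv' f h) β, eW]
    simp_rw [← wu_eq]
  have hfinal : deltak F hinv' (deltak F hinv' f h) k p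
      = wz (deltak F hinv' f h) k p
        - ∑ β, Ncf F hinv' β k p * wu (deltak F hinv' f h) β p := rfl
  rw [hfinal, ewz]
  simp_rw [ewu]
  congr 1
  · congr 1
    exact Finset.sum_congr rfl fun α _ => by ring
  · exact Finset.sum_congr rfl fun β _ => by
      congr 1
      congr 1
      exact Finset.sum_congr rfl fun α _ => by ring

lemma part2 (hS : IsOpen S) (hF : ContDiffOn ℝ (⊤ : ℕ∞) F S)
    (hspec : ∀ p ∈ S, ∀ α γ, ∑ β, hmet F α β p * hinv' β γ p = if α = γ then 1 else 0)
    (hp : p ∈ S) {f : (Fin n → ℂ) × (Fin m → ℂ) → ℂ} (hf : ContDiffOn ℝ 2 f S)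
    (k h : Fin n) :
    deltak F hinv' (deltak F hinv' f h) k p = deltak F hinv' (deltak F hinv' f k) h p := by
  rw [expand2 hS hF hspec hp hf k h, expand2 hS hF hspec hp hf h k]
  have hS2 : ∀ k' h' : Fin n, wz (wz f h') k' p = wz (wz f k') h' p := by
    intro k' h'
    rw [wz_eq f h', wz_eq f k', wz_eq, wz_eq]
    exact Wgen_comm hf hS hp
  have hV : ∀ α β : Fin m, wu (wu f α) β p = wu (wu f β) α p := by
    intro α β
    rw [wu_eq f α, wu_eq f β, wu_eq, wu_eq]
    exact Wgen_comm hf hS hp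
  have hP1 : ∀ (k' h' : Fin n) (α : Fin m),
      wz (Ncf F hinv' α h') k' p - ∑ β, Ncf F hinv' β k' p * wu (Ncf F hinv' α h') β p
      = wz (Ncf F hinv' α k') h' p - ∑ β, Ncf F hinv' β h' p * wu (Ncf F hinv' α k') β p :=
    fun k' h' α => part1 hS hF hspec hp k' h' α
  exact key_alg2 (fun α k' => Ncf F hinv' α k' p) (fun α => wu f α p)
    (fun k' α h' => wz (Ncf F hinv' α h') k' p)
    (fun β α h' => wu (Ncf F hinv' α h') β p)
    (fun k' h' => wz (wz f h') k' p) (fun k' α => wu (wz f k') α p)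
    (fun α β => wu (wu f α) β p) hS2 hV hP1 k h

end Part2

/-- the Chern–Finsler nonlinear connection coefficients satisfy
`δ_k N^σ_h = δ_h N^σ_k` on `U × (ℂᵐ \ {0})`; equivalently, the horizontal derivations
`δ_k` commute on every `C²` complex-valued function.  (This is
`ρ_𝒯([𝒳_α,𝒳_β]) = 0` for the Chern–Finsler connection when the anchor is the identity.) -/
theorem stmt7 {n m : ℕ} (U : Set (Fin n → ℂ)) (hU : IsOpen U)
    (F : (Fin n → ℂ) × (Fin m → ℂ) → ℝ)
    (hF : ContDiffOn ℝ (⊤ : ℕ∞) F {p : (Fin n → ℂ) × (Fin m → ℂ) | p.1 ∈ U ∧ p.2 ≠ 0})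
    (hinv : Fin m → Fin m → (Fin n → ℂ) × (Fin m → ℂ) → ℂ)
    (hinv_spec : ∀ p ∈ {p : (Fin n → ℂ) × (Fin m → ℂ) | p.1 ∈ U ∧ p.2 ≠ 0},
      ∀ α γ : Fin m, ∑ β, hmet F α β p * hinv β γ p = if α = γ then 1 else 0) :
    (∀ p ∈ {p : (Fin n → ℂ) × (Fin m → ℂ) | p.1 ∈ U ∧ p.2 ≠ 0}, ∀ (k h : Fin n) (σ : Fin m),
        deltak F hinv (Ncf F hinv σ h) k p = deltak F hinv (Ncf F hinv σ k) h p)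
    ∧ (∀ f : (Fin n → ℂ) × (Fin m → ℂ) → ℂ,
        ContDiffOn ℝ 2 f {p : (Fin n → ℂ) × (Fin m → ℂ) | p.1 ∈ U ∧ p.2 ≠ 0} →
        ∀ p ∈ {p : (Fin n → ℂ) × (Fin m → ℂ) | p.1 ∈ U ∧ p.2 ≠ 0}, ∀ k h : Fin n,
          deltak F hinv (deltak F hinv f h) k p = deltak F hinv (deltak F hinv f k) h p) := by
  have hS : IsOpen {p : (Fin n → ℂ) × (Fin m → ℂ) | p.1 ∈ U ∧ p.2 ≠ 0} := by
    have : {p : (Fin n → ℂ) × (Fin m → ℂ) | p.1 ∈ U ∧ p.2 ≠ 0}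
        = (Prod.fst ⁻¹' U) ∩ (Prod.snd ⁻¹' {0}ᶜ) := rfl
    rw [this]
    exact (hU.preimage continuous_fst).inter
      (isOpen_compl_singleton.preimage continuous_snd)
  exact ⟨fun p hp k h σ => part1 hS hF hinv_spec hp k h σ,
    fun f hf p hp k h => part2 hS hF hinv_spec hp hf k h⟩
end MainCtx
end DDlem
end

section
/- For every twice continuously real-differentiable complex-valued function f on U × ℂᵐ, the horizontal operators satisfy the commutator identity δ_α(δ_β f) − δ_β(δ_α f) = C^γ_{αβ}·δ_γ f + ℛ^γ_{αβ}·∂̇_γ f, where ℛ^γ_{αβ} := C^ε_{αβ}·N^γ_ε − δ_α N^γ_β + δ_β N^γ_α. (This is the local-operator form of the Lie bracket [𝒳_α,𝒳_β]_𝒯 = 𝒞^γ_{αβ}𝒳_γ + ℛ^γ_{αβ}𝒱_γ of the adapted frame on the prolongation of a holomorphic Lie algebroid.) -/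
open Complex BigOperators

/-- Wirtinger derivative `∂_h g` for a function of the base variable only. -/
noncomputable def wz1 {n : ℕ} (g : (Fin n → ℂ) → ℂ) (h : Fin n) (z : Fin n → ℂ) : ℂ :=
  (1/2) * (fderiv ℝ g z (Pi.single h 1)
    - Complex.I * fderiv ℝ g z (Pi.single h Complex.I))

/-- The anchored derivative `∂_α f = ρ^k_α·∂_k f`. -/
noncomputable def anch {n m : ℕ} (ρ : Fin n → Fin m → (Fin n → ℂ) → ℂ)
    (f : (Fin n → ℂ) × (Fin m → ℂ) → ℂ) (α : Fin m)
    (p : (Fin n → ℂ) × (Fin m → ℂ)) : ℂ :=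
  ∑ k, ρ k α p.1 * wz f k p

/-- The anchored horizontal derivative `δ_α f = ρ^k_α·∂_k f − N^γ_α·∂̇_γ f`. -/
noncomputable def hdel {n m : ℕ} (ρ : Fin n → Fin m → (Fin n → ℂ) → ℂ)
    (N : Fin m → Fin m → (Fin n → ℂ) × (Fin m → ℂ) → ℂ)
    (f : (Fin n → ℂ) × (Fin m → ℂ) → ℂ) (α : Fin m)
    (p : (Fin n → ℂ) × (Fin m → ℂ)) : ℂ :=
  anch ρ f α p - ∑ γ, N γ α p * wu f γ p

/-- directional Wirtinger (holomorphic-part) derivative -/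
noncomputable def Wd (g : (Fin n → ℂ) × (Fin m → ℂ) → ℂ)
    (w p : (Fin n → ℂ) × (Fin m → ℂ)) : ℂ :=
  (1/2) * (fderiv ℝ g p w - Complex.I * fderiv ℝ g p (Complex.I • w))

lemma single_I {n : ℕ} (k : Fin n) :
    (Complex.I • (Pi.single k 1 : Fin n → ℂ)) = Pi.single k Complex.I := by
  funext i
  by_cases h : i = k <;> simp [Pi.single_apply, h]

lemma Wd_mul {g h : (Fin n → ℂ) × (Fin m → ℂ) → ℂ} {p w}
    (hg : DifferentiableAt ℝ g p) (hh : DifferentiableAt ℝ h p) :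
    Wd (fun q => g q * h q) w p = Wd g w p * h p + g p * Wd h w p := by
  unfold Wd
  rw [fderiv_fun_mul hg hh]
  simp only [ContinuousLinearMap.add_apply, ContinuousLinearMap.smul_apply, smul_eq_mul]
  ring

lemma Wd_sum {ι : Type*} (s : Finset ι) {F : ι → (Fin n → ℂ) × (Fin m → ℂ) → ℂ}
    {p w} (hF : ∀ i ∈ s, DifferentiableAt ℝ (F i) p) :
    Wd (fun q => ∑ i ∈ s, F i q) w p = ∑ i ∈ s, Wd (F i) w p := by
  unfold Wd
  rw [fderiv_fun_sum hF]
  simp [ContinuousLinearMap.sum_apply, mul_sub, Finset.mul_sum, Finset.sum_sub_distrib]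

lemma wz_neg (g : (Fin n → ℂ) × (Fin m → ℂ) → ℂ) (k p) :
    wz (fun q => -(g q)) k p = - wz g k p := by
  simp only [wz, fderiv_fun_neg, ContinuousLinearMap.neg_apply]
  ring

lemma wu_neg (g : (Fin n → ℂ) × (Fin m → ℂ) → ℂ) (γ p) :
    wu (fun q => -(g q)) γ p = - wu g γ p := by
  simp only [wu, fderiv_fun_neg, ContinuousLinearMap.neg_apply]
  ring

lemma wz_eq_Wd (g : (Fin n → ℂ) × (Fin m → ℂ) → ℂ) (k p) :
    wz g k p = Wd g ((Pi.single k 1 : Fin n → ℂ), (0 : Fin m → ℂ)) p := by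
  unfold wz Wd
  congr 3
  rw [Prod.smul_mk, single_I, smul_zero]

lemma wu_eq_Wd (g : (Fin n → ℂ) × (Fin m → ℂ) → ℂ) (γ p) :
    wu g γ p = Wd g ((0 : Fin n → ℂ), (Pi.single γ 1 : Fin m → ℂ)) p := by
  unfold wu Wd
  congr 3
  rw [Prod.smul_mk, single_I, smul_zero]

section secondDeriv

variable {f : (Fin n → ℂ) × (Fin m → ℂ) → ℂ} {p : (Fin n → ℂ) × (Fin m → ℂ)}

lemma hasFDeriv_fderiv_apply (hf : ContDiffAt ℝ 2 f p)
    (w : (Fin n → ℂ) × (Fin m → ℂ)) :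
    HasFDerivAt (fun q => fderiv ℝ f q w)
      ((ContinuousLinearMap.apply ℝ ℂ w).comp (fderiv ℝ (fderiv ℝ f) p)) p := by
  have hd : DifferentiableAt ℝ (fderiv ℝ f) p :=
    (hf.fderiv_right (m := 1) (by norm_num)).differentiableAt (by norm_num)
  exact (ContinuousLinearMap.apply ℝ ℂ w).hasFDerivAt.comp p hd.hasFDerivAt

lemma diffAt_fderiv_apply (hf : ContDiffAt ℝ 2 f p)
    (w : (Fin n → ℂ) × (Fin m → ℂ)) :
    DifferentiableAt ℝ (fun q => fderiv ℝ f q w) p :=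
  (hasFDeriv_fderiv_apply hf w).differentiableAt

lemma Wd_diffAt (hf : ContDiffAt ℝ 2 f p) (w) :
    DifferentiableAt ℝ (Wd f w) p := by
  unfold Wd
  exact ((diffAt_fderiv_apply hf w).sub
    ((diffAt_fderiv_apply hf (Complex.I • w)).const_mul Complex.I)).const_mul _

lemma fderiv_Wd (hf : ContDiffAt ℝ 2 f p) (w v) :
    fderiv ℝ (Wd f w) p v
      = (1/2) * (fderiv ℝ (fderiv ℝ f) p v w
          - Complex.I * fderiv ℝ (fderiv ℝ f) p v (Complex.I • w)) := by
  have h1 := hasFDeriv_fderiv_apply hf w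
  have h2 := hasFDeriv_fderiv_apply hf (Complex.I • w)
  have h3 : HasFDerivAt (Wd f w)
      (((1:ℂ)/2) • (((ContinuousLinearMap.apply ℝ ℂ w).comp (fderiv ℝ (fderiv ℝ f) p))
        - Complex.I • ((ContinuousLinearMap.apply ℝ ℂ (Complex.I • w)).comp
            (fderiv ℝ (fderiv ℝ f) p)))) p := (h1.sub (h2.const_mul Complex.I)).const_mul _
  rw [h3.fderiv]
  simp [ContinuousLinearMap.smul_apply, ContinuousLinearMap.sub_apply,
    ContinuousLinearMap.comp_apply, ContinuousLinearMap.apply_apply, smul_eq_mul]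

lemma Wd_Wd_symm (hf : ContDiffAt ℝ 2 f p) (w v) :
    Wd (Wd f w) v p = Wd (Wd f v) w p := by
  have hs : ∀ a b, fderiv ℝ (fderiv ℝ f) p a b = fderiv ℝ (fderiv ℝ f) p b a :=
    hf.isSymmSndFDerivAt (by simp)
  show (1/2) * (fderiv ℝ (Wd f w) p v - Complex.I * fderiv ℝ (Wd f w) p (Complex.I • v))
    = (1/2) * (fderiv ℝ (Wd f v) p w - Complex.I * fderiv ℝ (Wd f v) p (Complex.I • w))
  rw [fderiv_Wd hf w v, fderiv_Wd hf w (Complex.I • v),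
    fderiv_Wd hf v w, fderiv_Wd hf v (Complex.I • w),
    hs v w, hs v (Complex.I • w), hs (Complex.I • v) w, hs (Complex.I • v) (Complex.I • w)]
  ring

end secondDeriv

lemma Wd_fst {g : (Fin n → ℂ) → ℂ} {p : (Fin n → ℂ) × (Fin m → ℂ)}
    (hg : DifferentiableAt ℝ g p.1) (v : Fin n → ℂ) :
    Wd (fun q => g q.1) (v, (0 : Fin m → ℂ)) p
      = (1/2) * (fderiv ℝ g p.1 v - Complex.I * fderiv ℝ g p.1 (Complex.I • v)) := by
  have h : HasFDerivAt (fun q : (Fin n → ℂ) × (Fin m → ℂ) => g q.1)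
      ((fderiv ℝ g p.1).comp (ContinuousLinearMap.fst ℝ (Fin n → ℂ) (Fin m → ℂ))) p :=
    hg.hasFDerivAt.comp p hasFDerivAt_fst
  unfold Wd
  rw [h.fderiv]
  rw [Prod.smul_mk, smul_zero]
  simp

lemma Wd_fst_u {g : (Fin n → ℂ) → ℂ} {p : (Fin n → ℂ) × (Fin m → ℂ)}
    (hg : DifferentiableAt ℝ g p.1) (u : Fin m → ℂ) :
    Wd (fun q => g q.1) ((0 : Fin n → ℂ), u) p = 0 := by
  have h : HasFDerivAt (fun q : (Fin n → ℂ) × (Fin m → ℂ) => g q.1)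
      ((fderiv ℝ g p.1).comp (ContinuousLinearMap.fst ℝ (Fin n → ℂ) (Fin m → ℂ))) p :=
    hg.hasFDerivAt.comp p hasFDerivAt_fst
  unfold Wd
  rw [h.fderiv]
  rw [Prod.smul_mk, smul_zero]
  simp

/-- adapted basis vectors indexed by `Fin n ⊕ Fin m` -/
noncomputable def bv {n m : ℕ} : Fin n ⊕ Fin m → (Fin n → ℂ) × (Fin m → ℂ)
  | Sum.inl k => ((Pi.single k 1 : Fin n → ℂ), 0)
  | Sum.inr γ => (0, (Pi.single γ 1 : Fin m → ℂ))

lemma comm_generic {X Y : (Fin n ⊕ Fin m) → (Fin n → ℂ) × (Fin m → ℂ) → ℂ}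
    {f : (Fin n → ℂ) × (Fin m → ℂ) → ℂ} {p : (Fin n → ℂ) × (Fin m → ℂ)}
    (hf2 : ContDiffAt ℝ 2 f p)
    (hX : ∀ i, DifferentiableAt ℝ (X i) p) (hY : ∀ i, DifferentiableAt ℝ (Y i) p) :
    (∑ j, X j p * Wd (fun q => ∑ i, Y i q * Wd f (bv i) q) (bv j) p)
      - (∑ j, Y j p * Wd (fun q => ∑ i, X i q * Wd f (bv i) q) (bv j) p)
    = ∑ i, ((∑ j, X j p * Wd (Y i) (bv j) p) - (∑ j, Y j p * Wd (X i) (bv j) p))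
        * Wd f (bv i) p := by
  have hWdf : ∀ i : Fin n ⊕ Fin m, DifferentiableAt ℝ (Wd f (bv i)) p :=
    fun i => Wd_diffAt hf2 _
  have expand : ∀ (Z : (Fin n ⊕ Fin m) → (Fin n → ℂ) × (Fin m → ℂ) → ℂ),
      (∀ i, DifferentiableAt ℝ (Z i) p) → ∀ j : Fin n ⊕ Fin m,
      Wd (fun q => ∑ i, Z i q * Wd f (bv i) q) (bv j) p
        = ∑ i, (Wd (Z i) (bv j) p * Wd f (bv i) p
            + Z i p * Wd (Wd f (bv i)) (bv j) p) := by
    intro Z hZ j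
    rw [Wd_sum (F := fun i q => Z i q * Wd f (bv i) q) _ (fun i _ => (hZ i).mul (hWdf i))]
    exact Finset.sum_congr rfl fun i _ => Wd_mul (hZ i) (hWdf i)
  have key : ∀ i j : Fin n ⊕ Fin m,
      Wd (Wd f (bv i)) (bv j) p = Wd (Wd f (bv j)) (bv i) p :=
    fun i j => Wd_Wd_symm hf2 _ _
  have hswap : ∑ j : Fin n ⊕ Fin m, ∑ i : Fin n ⊕ Fin m,
        X j p * (Y i p * Wd (Wd f (bv i)) (bv j) p)
      = ∑ j : Fin n ⊕ Fin m, ∑ i : Fin n ⊕ Fin m,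
        Y j p * (X i p * Wd (Wd f (bv i)) (bv j) p) := by
    rw [Finset.sum_comm]
    exact Finset.sum_congr rfl fun j _ => Finset.sum_congr rfl fun i _ => by
      rw [key j i]; ring
  have h1 : ∀ (Z W : (Fin n ⊕ Fin m) → (Fin n → ℂ) × (Fin m → ℂ) → ℂ),
      ∑ j : Fin n ⊕ Fin m, ∑ i : Fin n ⊕ Fin m,
        Z j p * (Wd (W i) (bv j) p * Wd f (bv i) p)
      = ∑ i : Fin n ⊕ Fin m, (∑ j : Fin n ⊕ Fin m, Z j p * Wd (W i) (bv j) p)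
          * Wd f (bv i) p := by
    intro Z W
    rw [Finset.sum_comm]
    exact Finset.sum_congr rfl fun i _ => by
      rw [Finset.sum_mul]
      exact Finset.sum_congr rfl fun j _ => (mul_assoc _ _ _).symm
  simp only [expand Y hY, expand X hX, mul_add, Finset.mul_sum, Finset.sum_add_distrib,
    sub_mul, Finset.sum_sub_distrib]
  rw [h1 X Y, h1 Y X, hswap]
  ring

/-- the commutator identity
`δ_α(δ_β f) − δ_β(δ_α f) = C^γ_{αβ}·δ_γ f + ℛ^γ_{αβ}·∂̇_γ f`, with
`ℛ^γ_{αβ} = C^ε_{αβ}·N^γ_ε − δ_α N^γ_β + δ_β N^γ_α`, the local form of the Lie bracket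
`[𝒳_α,𝒳_β]_𝒯 = 𝒞^γ_{αβ}𝒳_γ + ℛ^γ_{αβ}𝒱_γ` of the adapted frame. -/
theorem stmt8 {n m : ℕ} (U : Set (Fin n → ℂ)) (hU : IsOpen U)
    (ρ : Fin n → Fin m → (Fin n → ℂ) → ℂ)
    (hρ : ∀ (k : Fin n) (α : Fin m), DifferentiableOn ℂ (ρ k α) U)
    (C : Fin m → Fin m → Fin m → (Fin n → ℂ) → ℂ)
    (hC : ∀ (γ α β : Fin m), DifferentiableOn ℂ (C γ α β) U)
    (hCanti : ∀ (γ α β : Fin m) (z : Fin n → ℂ), C γ α β z = - C γ β α z)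
    (hcompat : ∀ z ∈ U, ∀ (k : Fin n) (α β : Fin m),
      (∑ h, ρ h α z * wz1 (ρ k β) h z) - (∑ h, ρ h β z * wz1 (ρ k α) h z)
        = ∑ γ, C γ α β z * ρ k γ z)
    (N : Fin m → Fin m → (Fin n → ℂ) × (Fin m → ℂ) → ℂ)
    (hN : ∀ (γ α : Fin m), ContDiffOn ℝ (⊤ : ℕ∞) (N γ α)
      {p : (Fin n → ℂ) × (Fin m → ℂ) | p.1 ∈ U})
    (f : (Fin n → ℂ) × (Fin m → ℂ) → ℂ)
    (hf : ContDiffOn ℝ 2 f {p : (Fin n → ℂ) × (Fin m → ℂ) | p.1 ∈ U})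
    (p : (Fin n → ℂ) × (Fin m → ℂ)) (hp : p.1 ∈ U) (α β : Fin m) :
    hdel ρ N (hdel ρ N f β) α p - hdel ρ N (hdel ρ N f α) β p
      = (∑ γ, C γ α β p.1 * hdel ρ N f γ p)
        + ∑ γ, ((∑ ε, C ε α β p.1 * N γ ε p)
            - hdel ρ N (N γ β) α p + hdel ρ N (N γ α) β p) * wu f γ p := by
  classical
  have hV : IsOpen {q : (Fin n → ℂ) × (Fin m → ℂ) | q.1 ∈ U} := hU.preimage continuous_fst
  have hpV : {q : (Fin n → ℂ) × (Fin m → ℂ) | q.1 ∈ U} ∈ nhds p := hV.mem_nhds hp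
  have hfp : ContDiffAt ℝ 2 f p := hf.contDiffAt hpV
  have hρd : ∀ (k : Fin n) (δ : Fin m),
      DifferentiableAt ℝ (fun q : (Fin n → ℂ) × (Fin m → ℂ) => ρ k δ q.1) p :=
    fun k δ => (((hρ k δ).differentiableAt (hU.mem_nhds hp)).restrictScalars ℝ).comp p
      differentiableAt_fst
  have hNd : ∀ γ δ : Fin m, DifferentiableAt ℝ (N γ δ) p :=
    fun γ δ => ((hN γ δ).contDiffAt hpV).differentiableAt (by simp)
  set X : Fin m → (Fin n ⊕ Fin m) → (Fin n → ℂ) × (Fin m → ℂ) → ℂ :=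
    fun δ => Sum.elim (fun k q => ρ k δ q.1) (fun γ q => -(N γ δ q)) with hXdef
  have hXd : ∀ δ i, DifferentiableAt ℝ (X δ i) p := by
    rintro δ (k | γ)
    · exact hρd k δ
    · exact (hNd γ δ).neg
  have hdel_eq : ∀ (g) (δ : Fin m) (q), hdel ρ N g δ q = ∑ i, X δ i q * Wd g (bv i) q := by
    intro g δ q
    rw [Fintype.sum_sum_type]
    simp only [hXdef, Sum.elim_inl, Sum.elim_inr, bv]
    simp [hdel, anch, wz_eq_Wd, wu_eq_Wd, neg_mul, Finset.sum_neg_distrib, sub_eq_add_neg]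
  have hfβ : hdel ρ N f β = fun q => ∑ i, X β i q * Wd f (bv i) q :=
    funext fun q => hdel_eq f β q
  have hfα : hdel ρ N f α = fun q => ∑ i, X α i q * Wd f (bv i) q :=
    funext fun q => hdel_eq f α q
  have hmain := comm_generic hfp (hXd α) (hXd β)
  have hL : hdel ρ N (hdel ρ N f β) α p - hdel ρ N (hdel ρ N f α) β p
      = ∑ i, (hdel ρ N (X β i) α p - hdel ρ N (X α i) β p) * Wd f (bv i) p := by
    rw [hdel_eq (hdel ρ N f β) α p, hdel_eq (hdel ρ N f α) β p, hfβ, hfα, hmain]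
    exact Finset.sum_congr rfl fun i _ => by
      rw [hdel_eq (X β i) α p, hdel_eq (X α i) β p]
  have hdel_fst : ∀ (g : (Fin n → ℂ) → ℂ), DifferentiableAt ℝ g p.1 → ∀ δ : Fin m,
      hdel ρ N (fun q => g q.1) δ p = ∑ h, ρ h δ p.1 * wz1 g h p.1 := by
    intro g hg δ
    have hz : ∀ h : Fin n, wz (fun q => g q.1) h p = wz1 g h p.1 := by
      intro h
      rw [wz_eq_Wd, Wd_fst hg]
      unfold wz1
      rw [single_I]
    have hu0 : ∀ γ : Fin m, wu (fun q => g q.1) γ p = 0 := by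
      intro γ
      rw [wu_eq_Wd, Wd_fst_u hg]
    simp [hdel, anch, hz, hu0]
  have hdel_neg : ∀ (g) (δ : Fin m), hdel ρ N (fun q => -(g q)) δ p = - hdel ρ N g δ p := by
    intro g δ
    simp only [hdel, anch, wz_neg, wu_neg, mul_neg, Finset.sum_neg_distrib]
    ring
  have hρdiff : ∀ (k : Fin n) (δ : Fin m), DifferentiableAt ℝ (ρ k δ) p.1 :=
    fun k δ => ((hρ k δ).differentiableAt (hU.mem_nhds hp)).restrictScalars ℝ
  have hcoef_l : ∀ k : Fin n,
      hdel ρ N (X β (Sum.inl k)) α p - hdel ρ N (X α (Sum.inl k)) β p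
        = ∑ γ, C γ α β p.1 * ρ k γ p.1 := by
    intro k
    simp only [hXdef, Sum.elim_inl]
    rw [hdel_fst (ρ k β) (hρdiff k β) α, hdel_fst (ρ k α) (hρdiff k α) β]
    exact hcompat p.1 hp k α β
  have hcoef_r : ∀ γ : Fin m,
      hdel ρ N (X β (Sum.inr γ)) α p - hdel ρ N (X α (Sum.inr γ)) β p
        = - hdel ρ N (N γ β) α p + hdel ρ N (N γ α) β p := by
    intro γ
    simp only [hXdef, Sum.elim_inr]
    rw [hdel_neg (N γ β) α, hdel_neg (N γ α) β]
    ring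
  rw [hL, Fintype.sum_sum_type]
  have step1 : ∑ k : Fin n,
      (hdel ρ N (X β (Sum.inl k)) α p - hdel ρ N (X α (Sum.inl k)) β p)
        * Wd f (bv (Sum.inl k)) p
      = ∑ k : Fin n, (∑ γ, C γ α β p.1 * ρ k γ p.1) * wz f k p := by
    refine Finset.sum_congr rfl fun k _ => ?_
    rw [hcoef_l k, wz_eq_Wd]
    rfl
  have step2 : ∑ γ : Fin m,
      (hdel ρ N (X β (Sum.inr γ)) α p - hdel ρ N (X α (Sum.inr γ)) β p)
        * Wd f (bv (Sum.inr γ)) p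
      = ∑ γ : Fin m, (- hdel ρ N (N γ β) α p + hdel ρ N (N γ α) β p) * wu f γ p := by
    refine Finset.sum_congr rfl fun γ _ => ?_
    rw [hcoef_r γ, wu_eq_Wd]
    rfl
  rw [step1, step2]
  have hRHS : (∑ γ, C γ α β p.1 * hdel ρ N f γ p)
      = ∑ γ, C γ α β p.1 * (∑ k, ρ k γ p.1 * wz f k p)
        - ∑ γ, C γ α β p.1 * (∑ ε, N ε γ p * wu f ε p) := by
    simp [hdel, anch, mul_sub, Finset.sum_sub_distrib]
  have swap1 : ∑ k, (∑ γ, C γ α β p.1 * ρ k γ p.1) * wz f k p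
      = ∑ γ, C γ α β p.1 * (∑ k, ρ k γ p.1 * wz f k p) := by
    simp only [Finset.sum_mul, Finset.mul_sum]
    rw [Finset.sum_comm]
    exact Finset.sum_congr rfl fun γ _ => Finset.sum_congr rfl fun k _ => by ring
  have swap2 : ∑ γ, C γ α β p.1 * (∑ ε, N ε γ p * wu f ε p)
      = ∑ γ, (∑ ε, C ε α β p.1 * N γ ε p) * wu f γ p := by
    simp only [Finset.sum_mul, Finset.mul_sum]
    rw [Finset.sum_comm]
    exact Finset.sum_congr rfl fun γ _ => Finset.sum_congr rfl fun ε _ => by ring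
  rw [hRHS, swap1, swap2]
  simp only [sub_mul, add_mul, neg_mul, Finset.sum_add_distrib, Finset.sum_sub_distrib,
    Finset.sum_neg_distrib]
  ring
end

section
/- Let ρ^k_α : U → ℂ be holomorphic functions (local anchor coefficients). Define ∂_α g := ρ^k_α·∂_k g, the anchored nonlinear connection coefficients N^γ_α := ρ^k_α·N^γ_k, the anchored horizontal derivative δ_β g := ρ^k_β·δ_k g, and the Chern–Finsler connection coefficients L^γ_{αβ} := h^{σ̄γ}·δ_β h_{ασ̄}. Then at every point of U × (ℂᵐ \ {0}) and for all 1 ≤ α, β, γ ≤ m: L^γ_{αβ} = ∂̇_α N^γ_β. -/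
open Complex BigOperators

/-- The anchored nonlinear connection coefficients `N^γ_β = ρ^k_β·N^γ_k`. -/
noncomputable def Nanch {n m : ℕ} (F : (Fin n → ℂ) × (Fin m → ℂ) → ℝ)
    (hinv : Fin m → Fin m → (Fin n → ℂ) × (Fin m → ℂ) → ℂ)
    (ρ : Fin n → Fin m → (Fin n → ℂ) → ℂ) (γ β : Fin m)
    (p : (Fin n → ℂ) × (Fin m → ℂ)) : ℂ :=
  ∑ k, ρ k β p.1 * Ncf F hinv γ k p

/-- The anchored horizontal derivative `δ_β g = ρ^k_β·δ_k g`. -/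
noncomputable def delanch {n m : ℕ} (F : (Fin n → ℂ) × (Fin m → ℂ) → ℝ)
    (hinv : Fin m → Fin m → (Fin n → ℂ) × (Fin m → ℂ) → ℂ)
    (ρ : Fin n → Fin m → (Fin n → ℂ) → ℂ)
    (g : (Fin n → ℂ) × (Fin m → ℂ) → ℂ) (β : Fin m)
    (p : (Fin n → ℂ) × (Fin m → ℂ)) : ℂ :=
  ∑ k, ρ k β p.1 * deltak F hinv g k p

/-! ### Auxiliary Wirtinger calculus -/

/-- generic directional Wirtinger-type operator -/
noncomputable def W {n m : ℕ} (c : ℂ) (v w : (Fin n → ℂ) × (Fin m → ℂ))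
    (g : (Fin n → ℂ) × (Fin m → ℂ) → ℂ)
    (p : (Fin n → ℂ) × (Fin m → ℂ)) : ℂ :=
  (1/2) * (fderiv ℝ g p v - c * fderiv ℝ g p w)

section WLemmas

variable {n m : ℕ} {p : (Fin n → ℂ) × (Fin m → ℂ)}

lemma wz_eq_W (g : (Fin n → ℂ) × (Fin m → ℂ) → ℂ) (k : Fin n) :
    wz g k = W Complex.I (Pi.single k 1, 0) (Pi.single k Complex.I, 0) g := rfl

lemma wu_eq_W (g : (Fin n → ℂ) × (Fin m → ℂ) → ℂ) (α : Fin m) :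
    wu g α = W Complex.I (0, Pi.single α 1) (0, Pi.single α Complex.I) g := rfl

lemma wubar_eq_W (g : (Fin n → ℂ) × (Fin m → ℂ) → ℂ) (α : Fin m) :
    wubar g α = W (-Complex.I) (0, Pi.single α 1) (0, Pi.single α Complex.I) g := by
  funext p
  simp only [wubar, W]
  ring

lemma dirDiff_contDiffOn {S : Set ((Fin n → ℂ) × (Fin m → ℂ))} (hS : IsOpen S)
    {g : (Fin n → ℂ) × (Fin m → ℂ) → ℂ} (hg : ContDiffOn ℝ (⊤ : ℕ∞) g S)
    (v : (Fin n → ℂ) × (Fin m → ℂ)) :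
    ContDiffOn ℝ (⊤ : ℕ∞) (fun q => fderiv ℝ g q v) S :=
  (hg.fderiv_of_isOpen hS (by simp)).clm_apply contDiffOn_const

lemma W_contDiffOn {S : Set ((Fin n → ℂ) × (Fin m → ℂ))} (hS : IsOpen S)
    {g : (Fin n → ℂ) × (Fin m → ℂ) → ℂ} (hg : ContDiffOn ℝ (⊤ : ℕ∞) g S)
    (c : ℂ) (v w : (Fin n → ℂ) × (Fin m → ℂ)) :
    ContDiffOn ℝ (⊤ : ℕ∞) (W c v w g) S :=
  contDiffOn_const.mul ((dirDiff_contDiffOn hS hg v).sub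
    (contDiffOn_const.mul (dirDiff_contDiffOn hS hg w)))

lemma W_mul {f g : (Fin n → ℂ) × (Fin m → ℂ) → ℂ} (hf : DifferentiableAt ℝ f p)
    (hg : DifferentiableAt ℝ g p) (c : ℂ) (v w : (Fin n → ℂ) × (Fin m → ℂ)) :
    W c v w (fun q => f q * g q) p = f p * W c v w g p + g p * W c v w f p := by
  unfold W
  rw [fderiv_fun_mul hf hg]
  simp only [ContinuousLinearMap.add_apply, ContinuousLinearMap.smul_apply, smul_eq_mul]
  ring

lemma W_sum {ι : Type*} {s : Finset ι} {f : ι → (Fin n → ℂ) × (Fin m → ℂ) → ℂ}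
    (h : ∀ i ∈ s, DifferentiableAt ℝ (f i) p) (c : ℂ) (v w : (Fin n → ℂ) × (Fin m → ℂ)) :
    W c v w (fun q => ∑ i ∈ s, f i q) p = ∑ i ∈ s, W c v w (f i) p := by
  unfold W
  rw [fderiv_fun_sum h]
  simp only [ContinuousLinearMap.sum_apply]
  simp only [mul_sub, Finset.mul_sum]
  rw [← Finset.sum_sub_distrib]

lemma W_const (d c : ℂ) (v w : (Fin n → ℂ) × (Fin m → ℂ)) :
    W c v w (fun _ => d) p = 0 := by
  simp [W]

lemma W_congr {f g : (Fin n → ℂ) × (Fin m → ℂ) → ℂ} (h : f =ᶠ[nhds p] g)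
    (c : ℂ) (v w : (Fin n → ℂ) × (Fin m → ℂ)) : W c v w f p = W c v w g p := by
  unfold W
  rw [h.fderiv_eq]

lemma dirDiff_diffAt {g : (Fin n → ℂ) × (Fin m → ℂ) → ℂ} (hg : ContDiffAt ℝ (⊤ : ℕ∞) g p)
    (v : (Fin n → ℂ) × (Fin m → ℂ)) :
    DifferentiableAt ℝ (fun q => fderiv ℝ g q v) p :=
  (((hg.fderiv_right (m := 1) (WithTop.coe_le_coe.mpr le_top)).clm_apply contDiffAt_const).differentiableAt (by simp))

lemma D2_swap {g : (Fin n → ℂ) × (Fin m → ℂ) → ℂ} (hg : ContDiffAt ℝ (⊤ : ℕ∞) g p)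
    (a b : (Fin n → ℂ) × (Fin m → ℂ)) :
    fderiv ℝ (fun q => fderiv ℝ g q a) p b = fderiv ℝ (fun q => fderiv ℝ g q b) p a := by
  have hd : DifferentiableAt ℝ (fderiv ℝ g) p :=
    (hg.fderiv_right (m := 1) (WithTop.coe_le_coe.mpr le_top)).differentiableAt (by simp)
  have h1 : ∀ a b : (Fin n → ℂ) × (Fin m → ℂ),
      fderiv ℝ (fun q => fderiv ℝ g q a) p b = fderiv ℝ (fderiv ℝ g) p b a := by
    intro a b
    rw [fderiv_clm_apply hd (differentiableAt_const a)]
    simp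
  rw [h1, h1]
  exact (hg.isSymmSndFDerivAt (by rw [minSmoothness_of_isRCLikeNormedField]; exact WithTop.coe_le_coe.mpr le_top)) b a

lemma fderiv_comb {f g : (Fin n → ℂ) × (Fin m → ℂ) → ℂ} (hf : DifferentiableAt ℝ f p)
    (hg : DifferentiableAt ℝ g p) (a c : ℂ) (x : (Fin n → ℂ) × (Fin m → ℂ)) :
    fderiv ℝ (fun q => a * (f q - c * g q)) p x
      = a * (fderiv ℝ f p x - c * fderiv ℝ g p x) := by
  rw [fderiv_const_mul (a := fun q => f q - c * g q) (hf.sub (hg.const_mul c)) a, fderiv_fun_sub hf (hg.const_mul c),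
      fderiv_const_mul hg c]
  simp [smul_eq_mul]

lemma W_swap {g : (Fin n → ℂ) × (Fin m → ℂ) → ℂ} (hg : ContDiffAt ℝ (⊤ : ℕ∞) g p)
    (c : ℂ) (v w : (Fin n → ℂ) × (Fin m → ℂ)) (c' : ℂ) (v' w' : (Fin n → ℂ) × (Fin m → ℂ)) :
    W c v w (W c' v' w' g) p = W c' v' w' (W c v w g) p := by
  have e : ∀ (c₀ : ℂ) (a b x : (Fin n → ℂ) × (Fin m → ℂ)),
      fderiv ℝ (W c₀ a b g) p x
        = (1/2) * (fderiv ℝ (fun q => fderiv ℝ g q a) p x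
            - c₀ * fderiv ℝ (fun q => fderiv ℝ g q b) p x) := by
    intro c₀ a b x
    exact fderiv_comb (dirDiff_diffAt hg a) (dirDiff_diffAt hg b) _ _ x
  show (1/2 : ℂ) * (fderiv ℝ (W c' v' w' g) p v - c * fderiv ℝ (W c' v' w' g) p w)
      = (1/2 : ℂ) * (fderiv ℝ (W c v w g) p v' - c' * fderiv ℝ (W c v w g) p w')
  rw [e c' v' w' v, e c' v' w' w, e c v w v', e c v w w',
      D2_swap hg v v', D2_swap hg w v', D2_swap hg v w', D2_swap hg w w']
  ring

lemma W_base (φ : (Fin n → ℂ) → ℂ) (hφ : DifferentiableAt ℝ φ p.1) (c : ℂ) (v w : Fin m → ℂ) :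
    W c (0, v) (0, w) (fun q => φ q.1) p = 0 := by
  have h : ∀ u : Fin m → ℂ,
      fderiv ℝ (fun q : (Fin n → ℂ) × (Fin m → ℂ) => φ q.1) p (0, u) = 0 := by
    intro u
    have hc : HasFDerivAt (fun q : (Fin n → ℂ) × (Fin m → ℂ) => φ q.1)
        ((fderiv ℝ φ p.1).comp (ContinuousLinearMap.fst ℝ (Fin n → ℂ) (Fin m → ℂ))) p :=
      hφ.hasFDerivAt.comp p hasFDerivAt_fst
    rw [hc.fderiv]
    simp
  simp [W, h]

lemma contDiffAt_finprod {ι : Type*} (s : Finset ι) (f : ι → (Fin n → ℂ) × (Fin m → ℂ) → ℂ)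
    (h : ∀ i ∈ s, ContDiffAt ℝ (⊤ : ℕ∞) (f i) p) :
    ContDiffAt ℝ (⊤ : ℕ∞) (fun q => ∏ i ∈ s, f i q) p := by
  classical
  induction s using Finset.cons_induction with
  | empty => simpa using contDiffAt_const (c := (1:ℂ))
  | cons a s ha ih =>
    simp only [Finset.prod_cons]
    exact (h a (Finset.mem_cons_self a s)).mul
      (ih fun i hi => h i (Finset.mem_cons_of_mem hi))

lemma contDiffAt_mdet {A : (Fin n → ℂ) × (Fin m → ℂ) → Matrix (Fin m) (Fin m) ℂ}
    (h : ∀ i j, ContDiffAt ℝ (⊤ : ℕ∞) (fun q => A q i j) p) :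
    ContDiffAt ℝ (⊤ : ℕ∞) (fun q => (A q).det) p := by
  simp only [Matrix.det_apply']
  apply ContDiffAt.sum
  intro σ _
  exact contDiffAt_const.mul (contDiffAt_finprod Finset.univ _ fun i _ => h (σ i) i)

lemma contDiffAt_madj {A : (Fin n → ℂ) × (Fin m → ℂ) → Matrix (Fin m) (Fin m) ℂ}
    (h : ∀ i j, ContDiffAt ℝ (⊤ : ℕ∞) (fun q => A q i j) p) (σ γ : Fin m) :
    ContDiffAt ℝ (⊤ : ℕ∞) (fun q => (A q).adjugate σ γ) p := by
  simp only [Matrix.adjugate_apply]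
  apply contDiffAt_mdet
  intro i j
  have e : (fun q => ((A q).updateRow γ (Pi.single σ 1)) i j)
      = if i = γ then (fun _ : (Fin n → ℂ) × (Fin m → ℂ) => (Pi.single σ (1:ℂ) : Fin m → ℂ) j)
        else fun q => A q i j := by
    ext q
    by_cases hh : i = γ <;> simp [Matrix.updateRow_apply, hh]
  rw [e]
  split_ifs
  · exact contDiffAt_const
  · exact h i j

lemma wu_mul {f g : (Fin n → ℂ) × (Fin m → ℂ) → ℂ} (hf : DifferentiableAt ℝ f p)
    (hg : DifferentiableAt ℝ g p) (α : Fin m) :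
    wu (fun q => f q * g q) α p = f p * wu g α p + g p * wu f α p := by
  simp only [wu_eq_W]
  exact W_mul hf hg _ _ _

lemma wu_sum {ι : Type*} {s : Finset ι} {f : ι → (Fin n → ℂ) × (Fin m → ℂ) → ℂ}
    (h : ∀ i ∈ s, DifferentiableAt ℝ (f i) p) (α : Fin m) :
    wu (fun q => ∑ i ∈ s, f i q) α p = ∑ i ∈ s, wu (f i) α p := by
  simp only [wu_eq_W]
  exact W_sum h _ _ _

lemma wu_congr {f g : (Fin n → ℂ) × (Fin m → ℂ) → ℂ} (h : f =ᶠ[nhds p] g) (α : Fin m) :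
    wu f α p = wu g α p := by
  simp only [wu_eq_W]
  exact W_congr h _ _ _

lemma wu_const (d : ℂ) (α : Fin m) : wu (fun _ : (Fin n → ℂ) × (Fin m → ℂ) => d) α p = 0 := by
  simp only [wu_eq_W]
  exact W_const d _ _ _

lemma wu_base (φ : (Fin n → ℂ) → ℂ) (hφ : DifferentiableAt ℝ φ p.1) (α : Fin m) :
    wu (fun q : (Fin n → ℂ) × (Fin m → ℂ) => φ q.1) α p = 0 := by
  simp only [wu_eq_W]
  exact W_base φ hφ _ _ _

lemma wu_wz_swap {g : (Fin n → ℂ) × (Fin m → ℂ) → ℂ} (hg : ContDiffAt ℝ (⊤ : ℕ∞) g p)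
    (α : Fin m) (k : Fin n) :
    wu (wz g k) α p = wz (wu g α) k p := by
  simp only [wu_eq_W, wz_eq_W]
  exact W_swap hg _ _ _ _ _ _

lemma wu_wu_swap {g : (Fin n → ℂ) × (Fin m → ℂ) → ℂ} (hg : ContDiffAt ℝ (⊤ : ℕ∞) g p)
    (α τ : Fin m) :
    wu (wu g τ) α p = wu (wu g α) τ p := by
  simp only [wu_eq_W]
  exact W_swap hg _ _ _ _ _ _

end WLemmas

/-- the Chern–Finsler connection coefficients
`L^γ_{αβ} = h^{σ̄γ}·δ_β h_{ασ̄}` satisfy `L^γ_{αβ} = ∂̇_α N^γ_β` on `U × (ℂᵐ \ {0})`,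
where `N^γ_β = ρ^k_β·N^γ_k` are the anchored nonlinear connection coefficients. -/
theorem stmt14 {n m : ℕ} (U : Set (Fin n → ℂ)) (hU : IsOpen U)
    (F : (Fin n → ℂ) × (Fin m → ℂ) → ℝ)
    (hF : ContDiffOn ℝ (⊤ : ℕ∞) F {p : (Fin n → ℂ) × (Fin m → ℂ) | p.1 ∈ U ∧ p.2 ≠ 0})
    (hinv : Fin m → Fin m → (Fin n → ℂ) × (Fin m → ℂ) → ℂ)
    (hinv_spec : ∀ p ∈ {p : (Fin n → ℂ) × (Fin m → ℂ) | p.1 ∈ U ∧ p.2 ≠ 0},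
      ∀ α γ : Fin m, ∑ β, hmet F α β p * hinv β γ p = if α = γ then 1 else 0)
    (ρ : Fin n → Fin m → (Fin n → ℂ) → ℂ)
    (hρ : ∀ (k : Fin n) (α : Fin m), DifferentiableOn ℂ (ρ k α) U)
    (p : (Fin n → ℂ) × (Fin m → ℂ)) (hp : p.1 ∈ U ∧ p.2 ≠ 0) (α β γ : Fin m) :
    (∑ σ, hinv σ γ p * delanch F hinv ρ (hmet F α σ) β p)
      = wu (Nanch F hinv ρ γ β) α p := by
  classical
  set S := {p : (Fin n → ℂ) × (Fin m → ℂ) | p.1 ∈ U ∧ p.2 ≠ 0} with hSdef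
  have hSopen : IsOpen S := by
    have he : S = (Prod.fst ⁻¹' U) ∩ (Prod.snd ⁻¹' ({0}ᶜ)) := by
      rw [hSdef]; ext q; simp [Set.mem_setOf_eq]
    rw [he]
    exact (hU.preimage continuous_fst).inter (isOpen_compl_singleton.preimage continuous_snd)
  have hpS : p ∈ S := hp
  have hmem : S ∈ nhds p := hSopen.mem_nhds hpS
  set G : (Fin n → ℂ) × (Fin m → ℂ) → ℂ := fun q => (F q : ℂ) with hGdef
  have hG : ContDiffOn ℝ (⊤ : ℕ∞) G S := Complex.ofRealCLM.contDiff.comp_contDiffOn hF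
  have hmet_eq : ∀ τ σ : Fin m, hmet F τ σ = wu (wubar G σ) τ := fun _ _ => rfl
  have hGbar : ∀ σ : Fin m, ContDiffOn ℝ (⊤ : ℕ∞) (wubar G σ) S := by
    intro σ
    rw [wubar_eq_W]
    exact W_contDiffOn hSopen hG _ _ _
  have hGbarAt : ∀ σ : Fin m, ContDiffAt ℝ (⊤ : ℕ∞) (wubar G σ) p := fun σ => (hGbar σ).contDiffAt hmem
  have hmetAt : ∀ τ σ : Fin m, ContDiffAt ℝ (⊤ : ℕ∞) (hmet F τ σ) p := by
    intro τ σ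
    rw [hmet_eq, wu_eq_W]
    exact (W_contDiffOn hSopen (hGbar σ) _ _ _).contDiffAt hmem
  have hmetD : ∀ τ σ : Fin m, DifferentiableAt ℝ (hmet F τ σ) p :=
    fun τ σ => (hmetAt τ σ).differentiableAt (by simp)
  have hBS : ∀ (σ : Fin m) (k : Fin n), ContDiffOn ℝ (⊤ : ℕ∞) (wz (wubar G σ) k) S := by
    intro σ k
    rw [wz_eq_W]
    exact W_contDiffOn hSopen (hGbar σ) _ _ _
  have hBD : ∀ (σ : Fin m) (k : Fin n), DifferentiableAt ℝ (wz (wubar G σ) k) p :=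
    fun σ k => (((hBS σ k).contDiffAt hmem).differentiableAt (by simp))
  -- the matrix identity and smoothness of `hinv`
  have hMeq : ∀ q ∈ S,
      (Matrix.of fun a b => hmet F a b q) * (Matrix.of fun a b => hinv a b q) = 1 := by
    intro q hq
    ext a b
    rw [Matrix.mul_apply, Matrix.one_apply]
    simpa using hinv_spec q hq a b
  have hinv_eqS : ∀ (σ' γ' : Fin m), ∀ q ∈ S, hinv σ' γ' q
      = ((Matrix.of fun a b => hmet F a b q).det)⁻¹
        * (Matrix.of fun a b => hmet F a b q).adjugate σ' γ' := by
    intro σ' γ' q hq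
    have h1 := Matrix.inv_eq_right_inv (hMeq q hq)
    have h2 : hinv σ' γ' q = (Matrix.of fun a b => hmet F a b q)⁻¹ σ' γ' := by
      rw [h1]; rfl
    rw [h2, Matrix.inv_def, Matrix.smul_apply, Ring.inverse_eq_inv, smul_eq_mul]
  have hdetAt : ContDiffAt ℝ (⊤ : ℕ∞) (fun q => (Matrix.of fun a b => hmet F a b q).det) p :=
    contDiffAt_mdet fun i j => hmetAt i j
  have hdetne : (Matrix.of fun a b => hmet F a b p).det ≠ 0 :=
    (Matrix.isUnit_det_of_right_inverse (hMeq p hpS)).ne_zero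
  have hinvAt : ∀ σ' γ' : Fin m, ContDiffAt ℝ (⊤ : ℕ∞) (hinv σ' γ') p := by
    intro σ' γ'
    have hsm : ContDiffAt ℝ (⊤ : ℕ∞) (fun q => ((Matrix.of fun a b => hmet F a b q).det)⁻¹
        * (Matrix.of fun a b => hmet F a b q).adjugate σ' γ') p :=
      (hdetAt.inv hdetne).mul (contDiffAt_madj (fun i j => hmetAt i j) σ' γ')
    apply hsm.congr_of_eventuallyEq
    filter_upwards [hmem] with q hq
    exact hinv_eqS σ' γ' q hq
  have hinvD : ∀ σ' γ' : Fin m, DifferentiableAt ℝ (hinv σ' γ') p :=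
    fun σ' γ' => (hinvAt σ' γ').differentiableAt (by simp)
  -- the inverse is two-sided at p
  have hLeft : ∀ b c' : Fin m, ∑ ν, hinv b ν p * hmet F ν c' p = if b = c' then 1 else 0 := by
    intro b c'
    have h2 : (Matrix.of fun a b => hinv a b p) * (Matrix.of fun a b => hmet F a b p) = 1 :=
      mul_eq_one_comm.mp (hMeq p hpS)
    have h3 := congrFun (congrFun h2 b) c'
    simpa [Matrix.mul_apply, Matrix.one_apply] using h3
  -- differentiating the inverse identity
  have stepI : ∀ (α' τ γ' : Fin m),
      ∑ σ', (hmet F τ σ' p * wu (hinv σ' γ') α' p + hinv σ' γ' p * wu (hmet F τ σ') α' p) = 0 := by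
    intro α' τ γ'
    have hev : (fun q => ∑ σ', hmet F τ σ' q * hinv σ' γ' q)
        =ᶠ[nhds p] (fun _ => if τ = γ' then (1:ℂ) else 0) := by
      filter_upwards [hmem] with q hq
      exact hinv_spec q hq τ γ'
    have h0 : wu (fun q => ∑ σ', hmet F τ σ' q * hinv σ' γ' q) α' p = 0 := by
      rw [wu_congr hev, wu_const]
    rw [wu_sum (fun σ' _ => (hmetD τ σ').fun_mul (hinvD σ' γ')) α'] at h0
    rw [← h0]
    refine Finset.sum_congr rfl fun σ' _ => ?_
    rw [wu_mul (hmetD τ σ') (hinvD σ' γ')]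
  -- formula for the derivative of the inverse entries
  have step3 : ∀ ν : Fin m, wu (hinv ν γ) α p
      = -∑ τ, hinv ν τ p * ∑ σ', wu (hmet F τ σ') α p * hinv σ' γ p := by
    intro ν
    have e1 : wu (hinv ν γ) α p
        = ∑ σ', (∑ τ, hinv ν τ p * hmet F τ σ' p) * wu (hinv σ' γ) α p := by
      have hL : ∀ σ' : Fin m, (∑ τ, hinv ν τ p * hmet F τ σ' p) = if ν = σ' then 1 else 0 :=
        fun σ' => hLeft ν σ'
      simp only [hL, ite_mul, one_mul, zero_mul, Finset.sum_ite_eq, Finset.mem_univ, if_true]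
    rw [e1]
    have e2 : ∀ σ' : Fin m, (∑ τ, hinv ν τ p * hmet F τ σ' p) * wu (hinv σ' γ) α p
        = ∑ τ, hinv ν τ p * (hmet F τ σ' p * wu (hinv σ' γ) α p) := by
      intro σ'
      rw [Finset.sum_mul]
      exact Finset.sum_congr rfl fun τ _ => by ring
    simp only [e2]
    rw [Finset.sum_comm]
    have e3 : ∀ τ : Fin m, ∑ σ', hinv ν τ p * (hmet F τ σ' p * wu (hinv σ' γ) α p)
        = hinv ν τ p * ∑ σ', hmet F τ σ' p * wu (hinv σ' γ) α p := by
      intro τ; rw [Finset.mul_sum]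
    simp only [e3]
    have e4 : ∀ τ : Fin m, ∑ σ', hmet F τ σ' p * wu (hinv σ' γ) α p
        = -∑ σ', wu (hmet F τ σ') α p * hinv σ' γ p := by
      intro τ
      have h5 := stepI α τ γ
      rw [Finset.sum_add_distrib] at h5
      have h6 := eq_neg_of_add_eq_zero_left h5
      rw [h6]
      congr 1
      exact Finset.sum_congr rfl fun σ' _ => by ring
    simp only [e4, mul_neg]
    rw [Finset.sum_neg_distrib]
  -- symmetry of third fibre derivatives
  have hsymC : ∀ τ σ' : Fin m, wu (hmet F τ σ') α p = wu (hmet F α σ') τ p := by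
    intro τ σ'
    rw [hmet_eq τ σ', hmet_eq α σ']
    exact wu_wu_swap (hGbarAt σ') α τ
  have hswapzk : ∀ (σ' : Fin m) (k : Fin n),
      wu (wz (wubar G σ') k) α p = wz (hmet F α σ') k p := by
    intro σ' k
    rw [wu_wz_swap (hGbarAt σ') α k, hmet_eq α σ']
  have hNcfD : ∀ (γ' : Fin m) (k : Fin n), DifferentiableAt ℝ (Ncf F hinv γ' k) p := by
    intro γ' k
    have hNe : Ncf F hinv γ' k = fun q => ∑ σ', hinv σ' γ' q * wz (wubar G σ') k q := rfl
    rw [hNe]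
    exact DifferentiableAt.fun_sum fun σ' _ => (hinvD σ' γ').mul (hBD σ' k)
  -- triple sum index swap
  have swap3 : ∀ f : Fin m → Fin m → Fin m → ℂ,
      ∑ a : Fin m, ∑ b : Fin m, ∑ c : Fin m, f a b c
        = ∑ a : Fin m, ∑ b : Fin m, ∑ c : Fin m, f c b a := by
    intro f
    calc ∑ a : Fin m, ∑ b : Fin m, ∑ c : Fin m, f a b c
        = ∑ a : Fin m, ∑ c : Fin m, ∑ b : Fin m, f a b c :=
          Finset.sum_congr rfl fun _ _ => Finset.sum_comm
      _ = ∑ c : Fin m, ∑ a : Fin m, ∑ b : Fin m, f a b c := Finset.sum_comm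
      _ = ∑ c : Fin m, ∑ b : Fin m, ∑ a : Fin m, f a b c :=
          Finset.sum_congr rfl fun _ _ => Finset.sum_comm
  -- the key per-k identity
  have step4 : ∀ k : Fin n,
      ∑ σ', hinv σ' γ p * deltak F hinv (hmet F α σ') k p = wu (Ncf F hinv γ k) α p := by
    intro k
    have hNcf_eq : Ncf F hinv γ k = fun q => ∑ σ', hinv σ' γ q * wz (wubar G σ') k q := rfl
    have e1 : wu (Ncf F hinv γ k) α p
        = ∑ σ', (hinv σ' γ p * wu (wz (wubar G σ') k) α p
            + wz (wubar G σ') k p * wu (hinv σ' γ) α p) := by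
      rw [hNcf_eq, wu_sum (fun σ' _ => (hinvD σ' γ).fun_mul (hBD σ' k)) α]
      exact Finset.sum_congr rfl fun σ' _ => wu_mul (hinvD σ' γ) (hBD σ' k) α
    rw [e1, Finset.sum_add_distrib]
    have e2 : ∀ σ' : Fin m, deltak F hinv (hmet F α σ') k p
        = wz (hmet F α σ') k p - ∑ τ, Ncf F hinv τ k p * wu (hmet F α σ') τ p := fun σ' => rfl
    simp only [e2, mul_sub]
    rw [Finset.sum_sub_distrib]
    have e3 : ∑ σ', hinv σ' γ p * wz (hmet F α σ') k p
        = ∑ σ', hinv σ' γ p * wu (wz (wubar G σ') k) α p :=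
      Finset.sum_congr rfl fun σ' _ => by rw [hswapzk σ' k]
    rw [e3]
    have claim : ∑ σ', wz (wubar G σ') k p * wu (hinv σ' γ) α p
        = -∑ σ', hinv σ' γ p * ∑ τ, Ncf F hinv τ k p * wu (hmet F α σ') τ p := by
      have lhsT : ∑ σ', wz (wubar G σ') k p * wu (hinv σ' γ) α p
          = ∑ σ' : Fin m, ∑ τ : Fin m, ∑ ν : Fin m, -(wz (wubar G σ') k p * hinv σ' τ p
              * wu (hmet F τ ν) α p * hinv ν γ p) := by
        refine Finset.sum_congr rfl fun σ' _ => ?_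
        rw [step3 σ']
        rw [mul_neg, Finset.mul_sum, ← Finset.sum_neg_distrib]
        refine Finset.sum_congr rfl fun τ _ => ?_
        rw [Finset.mul_sum, Finset.mul_sum, ← Finset.sum_neg_distrib]
        refine Finset.sum_congr rfl fun ν _ => ?_
        ring
      have rhsT : ∑ σ', hinv σ' γ p * ∑ τ, Ncf F hinv τ k p * wu (hmet F α σ') τ p
          = ∑ σ' : Fin m, ∑ τ : Fin m, ∑ ν : Fin m, wz (wubar G ν) k p * hinv ν τ p
              * wu (hmet F τ σ') α p * hinv σ' γ p := by
        refine Finset.sum_congr rfl fun σ' _ => ?_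
        rw [Finset.mul_sum]
        refine Finset.sum_congr rfl fun τ _ => ?_
        have hN : Ncf F hinv τ k p = ∑ ν, hinv ν τ p * wz (wubar G ν) k p := rfl
        rw [← hsymC τ σ', hN, Finset.sum_mul, Finset.mul_sum]
        refine Finset.sum_congr rfl fun ν _ => ?_
        ring
      rw [lhsT, swap3 (fun a b c => -(wz (wubar G a) k p * hinv a b p
          * wu (hmet F b c) α p * hinv c γ p)), rhsT]
      simp only [Finset.sum_neg_distrib]
    rw [claim]
    ring
  -- the outer (anchored) reduction
  have hρD : ∀ k : Fin n,
      DifferentiableAt ℝ (fun q : (Fin n → ℂ) × (Fin m → ℂ) => ρ k β q.1) p := by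
    intro k
    have h1 : DifferentiableAt ℂ (ρ k β) p.1 := (hρ k β).differentiableAt (hU.mem_nhds hp.1)
    exact (h1.restrictScalars ℝ).comp p differentiableAt_fst
  have outer : wu (Nanch F hinv ρ γ β) α p = ∑ k, ρ k β p.1 * wu (Ncf F hinv γ k) α p := by
    have hNanch_eq : Nanch F hinv ρ γ β
        = fun q => ∑ k, (fun q' : (Fin n → ℂ) × (Fin m → ℂ) => ρ k β q'.1) q
            * Ncf F hinv γ k q := rfl
    rw [hNanch_eq, wu_sum (fun k _ => (hρD k).fun_mul (hNcfD γ k)) α]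
    refine Finset.sum_congr rfl fun k _ => ?_
    rw [wu_mul (hρD k) (hNcfD γ k) α,
      wu_base (ρ k β) (((hρ k β).differentiableAt (hU.mem_nhds hp.1)).restrictScalars ℝ) α]
    ring
  have final : (∑ σ, hinv σ γ p * delanch F hinv ρ (hmet F α σ) β p)
      = ∑ k, ρ k β p.1 * ∑ σ', hinv σ' γ p * deltak F hinv (hmet F α σ') k p := by
    have hdel : ∀ σ' : Fin m, delanch F hinv ρ (hmet F α σ') β p
        = ∑ k, ρ k β p.1 * deltak F hinv (hmet F α σ') k p := fun σ' => rfl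
    simp only [hdel, Finset.mul_sum]
    rw [Finset.sum_comm]
    exact Finset.sum_congr rfl fun k _ => Finset.sum_congr rfl fun σ' _ => by ring
  rw [final, outer]
  exact Finset.sum_congr rfl fun k _ => by rw [step4 k]
end
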